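/- arXiv:2109.07502 — 3 statements merged into one kernel-verified Lean document; each statement's English description precedes it below -/
import Mathlib

section
/- Under assumptions (a)–(e) of the cluster randomized setting, the conditional expectation of the treated-branch contribution given the graph satisfies μ[Y1 · 1{Z' = 1} | σ(G)] = E[Y1] · π'(G) μ-almost surely, where π'(x) = π + g(x)(1 − π). -/
open MeasureTheory ProbabilityTheory
open scoped NNReal ENNReal


lemma meas_eq_of_diff_subset_null {Ω : Type*} [MeasurableSpace Ω]
    (κ : Measure Ω) {N a b : Set Ω} (hN : κ N = 0)
    (h1 : a \ b ⊆ N) (h2 : b \ a ⊆ N) : κ a = κ b := by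
  have key : ∀ u v : Set Ω, u \ v ⊆ N → κ u ≤ κ v := by
    intro u v huv
    calc κ u ≤ κ (v ∪ N) := measure_mono (fun x hx => by
            by_cases hxv : x ∈ v
            · exact Or.inl hxv
            · exact Or.inr (huv ⟨hx, hxv⟩))
      _ ≤ κ v + κ N := measure_union_le _ _
      _ = κ v := by rw [hN, add_zero]
  exact le_antisymm (key a b h1) (key b a h2)

lemma condExpKernel_null_ae_trim {Ω : Type*} {m' : MeasurableSpace Ω} {mΩ : MeasurableSpace Ω}
    [StandardBorelSpace Ω] (hm' : m' ≤ mΩ) (ν : Measure Ω) [IsFiniteMeasure ν]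
    {N : Set Ω} (hNm : MeasurableSet N) (hN : ν N = 0) :
    ∀ᵐ ω ∂(ν.trim hm'), condExpKernel ν m' ω N = 0 := by
  have h1 : (fun ω => (condExpKernel ν m' ω N).toReal) =ᵐ[ν] ν⟦N | m'⟧ :=
    condExpKernel_ae_eq_condExp hm' hNm
  have h2 : (ν⟦N | m'⟧) =ᵐ[ν] 0 := by
    have hz : (Set.indicator N fun _ => (1 : ℝ)) =ᵐ[ν] 0 := by
      have : ∀ᵐ ω ∂ν, ω ∉ N := by
        rw [ae_iff]
        simpa using hN
      filter_upwards [this] with ω hω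
      simp [Set.indicator_apply, hω]
    calc (ν⟦N | m'⟧) =ᵐ[ν] ν[(0 : Ω → ℝ) | m'] := condExp_congr_ae hz
      _ = 0 := condExp_zero
  have hae : ∀ᵐ ω ∂ν, condExpKernel ν m' ω N = 0 := by
    filter_upwards [h1.trans h2] with ω hω
    have hfin : condExpKernel ν m' ω N ≠ ⊤ := measure_ne_top _ _
    simpa [ENNReal.toReal_eq_zero_iff, hfin] using hω
  have hmeas : MeasurableSet[m'] {ω | condExpKernel ν m' ω N = 0} :=
    (measurable_condExpKernel hNm) (measurableSet_singleton 0)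
  rw [ae_iff] at hae ⊢
  have heq : {ω | ¬ condExpKernel ν m' ω N = 0} = {ω | condExpKernel ν m' ω N = 0}ᶜ := rfl
  rw [heq] at hae ⊢
  rwa [trim_measurableSet_eq hm' hmeas.compl]

lemma CondIndepFun.congr_left' {Ω β γ : Type*} {m' : MeasurableSpace Ω} {mΩ : MeasurableSpace Ω}
    [StandardBorelSpace Ω] [MeasurableSpace β] [MeasurableSpace γ]
    {hm' : m' ≤ mΩ} {f f' : Ω → β} {g : Ω → γ}
    {ν : Measure Ω} [IsFiniteMeasure ν]
    (h : CondIndepFun m' hm' f g ν) (hff' : f =ᵐ[ν] f') :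
    CondIndepFun m' hm' f' g ν := by
  have hNnull : ν {ω | f ω ≠ f' ω} = 0 := by
    rw [Filter.EventuallyEq, ae_iff] at hff'
    exact hff'
  set N : Set Ω := toMeasurable ν {ω | f ω ≠ f' ω} with hNdef
  have hNm : MeasurableSet N := measurableSet_toMeasurable _ _
  have hN0 : ν N = 0 := by rw [hNdef, measure_toMeasurable]; exact hNnull
  have hsub : {ω | f ω ≠ f' ω} ⊆ N := subset_toMeasurable _ _
  have hkern := condExpKernel_null_ae_trim hm' ν hNm hN0
  intro t1 t2 ht1 ht2
  obtain ⟨s, hs, rfl⟩ := ht1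
  have h12 := h (f ⁻¹' s) t2 ⟨s, hs, rfl⟩ ht2
  filter_upwards [hkern, h12] with ω hω0 hω
  have e1 : condExpKernel ν m' ω (f' ⁻¹' s ∩ t2) = condExpKernel ν m' ω (f ⁻¹' s ∩ t2) := by
    refine meas_eq_of_diff_subset_null _ hω0 ?_ ?_
    · rintro x ⟨⟨hx1, hx2⟩, hx3⟩
      refine hsub ?_
      intro hfx
      refine hx3 ⟨?_, hx2⟩
      simp only [Set.mem_preimage] at hx1 ⊢
      rw [hfx]; exact hx1
    · rintro x ⟨⟨hx1, hx2⟩, hx3⟩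
      refine hsub ?_
      intro hfx
      refine hx3 ⟨?_, hx2⟩
      simp only [Set.mem_preimage] at hx1 ⊢
      rw [← hfx]; exact hx1
  have e2 : condExpKernel ν m' ω (f' ⁻¹' s) = condExpKernel ν m' ω (f ⁻¹' s) := by
    refine meas_eq_of_diff_subset_null _ hω0 ?_ ?_
    · rintro x ⟨hx1, hx3⟩
      refine hsub ?_
      intro hfx
      refine hx3 ?_
      simp only [Set.mem_preimage] at hx1 ⊢
      rw [hfx]; exact hx1
    · rintro x ⟨hx1, hx3⟩
      refine hsub ?_
      intro hfx
      refine hx3 ?_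
      simp only [Set.mem_preimage] at hx1 ⊢
      rw [← hfx]; exact hx1
  rw [e1, e2, hω]


lemma key_prod {Ω : Type*} {m' : MeasurableSpace Ω} {mΩ : MeasurableSpace Ω}
    [StandardBorelSpace Ω] [Nonempty Ω] (hm' : m' ≤ mΩ) (ν : Measure Ω)
    [IsProbabilityMeasure ν] {f : Ω → ℝ} (hfm : Measurable f) (hfi : Integrable f ν)
    {B : Set Ω} (hB : MeasurableSet B)
    (h : ∀ s : Set ℝ, MeasurableSet s →
      (ν⟦f ⁻¹' s ∩ B | m'⟧) =ᵐ[ν] fun ω => (ν⟦f ⁻¹' s | m'⟧) ω * (ν⟦B | m'⟧) ω)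
    {A : Set Ω} (hA : MeasurableSet[m'] A) :
    ∫ ω in A, f ω * B.indicator (fun _ => (1:ℝ)) ω ∂ν
      = ∫ ω in A, f ω * (ν⟦B | m'⟧) ω ∂ν := by
  have hAm : MeasurableSet A := hm' _ hA
  set q : Ω → ℝ := ν⟦B | m'⟧ with hqdef
  have hq_sm : StronglyMeasurable[m'] q := stronglyMeasurable_condExp
  have hq_meas : Measurable q := (hq_sm.mono hm').measurable
  have hq_int : Integrable q ν := integrable_condExp
  have hind_int : Integrable (B.indicator fun _ => (1:ℝ)) ν := (integrable_const 1).indicator hB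
  have hq_nonneg : 0 ≤ᵐ[ν] q :=
    condExp_nonneg (Filter.Eventually.of_forall fun ω => Set.indicator_nonneg (fun _ _ => zero_le_one) ω)
  have hq_le_one : q ≤ᵐ[ν] fun _ => (1:ℝ) := by
    have hle := condExp_mono (μ := ν) (m := m') hind_int (integrable_const (1:ℝ))
      (Filter.Eventually.of_forall fun ω => by
        by_cases hω : ω ∈ B <;> simp [Set.indicator_apply, hω])
    rwa [condExp_const hm'] at hle
  have hq_bound : ∀ᵐ x ∂ν, ‖q x‖ ≤ 1 := by
    filter_upwards [hq_nonneg, hq_le_one] with x h0 h1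
    rw [Real.norm_eq_abs, abs_of_nonneg h0]
    exact h1
  -- key real identity
  have r1 : ∀ s : Set ℝ, MeasurableSet s →
      ∫ ω in A, (f ⁻¹' s ∩ B).indicator (fun _ => (1:ℝ)) ω ∂ν
        = ∫ ω in A, (f ⁻¹' s).indicator (fun _ => (1:ℝ)) ω * q ω ∂ν := by
    intro s hs
    have hE : MeasurableSet (f ⁻¹' s) := hfm hs
    have hint1 : Integrable ((f ⁻¹' s ∩ B).indicator fun _ => (1:ℝ)) ν :=
      (integrable_const 1).indicator (hE.inter hB)
    have hint2 : Integrable ((f ⁻¹' s).indicator fun _ => (1:ℝ)) ν :=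
      (integrable_const 1).indicator hE
    have hqind_int : Integrable (q * (f ⁻¹' s).indicator fun _ => (1:ℝ)) ν :=
      hint2.bdd_mul hq_int.1 hq_bound
    have hmul := condExp_mul_of_stronglyMeasurable_left (μ := ν) hq_sm hqind_int hint2
    calc ∫ ω in A, (f ⁻¹' s ∩ B).indicator (fun _ => (1:ℝ)) ω ∂ν
        = ∫ ω in A, (ν⟦f ⁻¹' s ∩ B | m'⟧) ω ∂ν := (setIntegral_condExp hm' hint1 hA).symm
      _ = ∫ ω in A, (ν⟦f ⁻¹' s | m'⟧) ω * q ω ∂ν :=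
          integral_congr_ae (ae_restrict_of_ae (h s hs))
      _ = ∫ ω in A, (ν[q * (f ⁻¹' s).indicator fun _ => (1:ℝ) | m']) ω ∂ν := by
          refine integral_congr_ae (ae_restrict_of_ae ?_)
          filter_upwards [hmul] with ω hω
          rw [hω]
          simp [mul_comm]
      _ = ∫ ω in A, (q * (f ⁻¹' s).indicator fun _ => (1:ℝ)) ω ∂ν :=
          setIntegral_condExp hm' hqind_int hA
      _ = ∫ ω in A, (f ⁻¹' s).indicator (fun _ => (1:ℝ)) ω * q ω ∂ν := by
          refine integral_congr_ae (Filter.Eventually.of_forall fun ω => ?_)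
          simp [mul_comm]
  -- equality of mapped measures
  have hlam : (ν.restrict (A ∩ B)).map f
      = ((ν.restrict A).withDensity fun ω => ENNReal.ofReal (q ω)).map f := by
    ext s hs
    have hE : MeasurableSet (f ⁻¹' s) := hfm hs
    rw [Measure.map_apply hfm hs, Measure.map_apply hfm hs,
      Measure.restrict_apply hE, withDensity_apply _ hE]
    rw [show (ν.restrict A).restrict (f ⁻¹' s) = ν.restrict (f ⁻¹' s ∩ A) from
      Measure.restrict_restrict hE]
    have hr : ∫⁻ ω, ENNReal.ofReal (q ω) ∂(ν.restrict (f ⁻¹' s ∩ A))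
        = ENNReal.ofReal (∫ ω in f ⁻¹' s ∩ A, q ω ∂ν) :=
      (ofReal_integral_eq_lintegral_ofReal hq_int.restrict (ae_restrict_of_ae hq_nonneg)).symm
    rw [hr, ← ENNReal.ofReal_toReal (measure_ne_top ν (f ⁻¹' s ∩ (A ∩ B)))]
    congr 1
    -- toReal equality via r1
    have left1 : ∫ ω in A, (f ⁻¹' s ∩ B).indicator (fun _ => (1:ℝ)) ω ∂ν
        = (ν (f ⁻¹' s ∩ (A ∩ B))).toReal := by
      rw [integral_indicator (hE.inter hB), setIntegral_const,
        measureReal_restrict_apply (hE.inter hB), smul_eq_mul, mul_one, measureReal_def]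
      congr 1
      rw [Set.inter_assoc, Set.inter_comm B A]
    have right1 : ∫ ω in A, (f ⁻¹' s).indicator (fun _ => (1:ℝ)) ω * q ω ∂ν
        = ∫ ω in f ⁻¹' s ∩ A, q ω ∂ν := by
      have : ∀ ω, (f ⁻¹' s).indicator (fun _ => (1:ℝ)) ω * q ω
          = (f ⁻¹' s).indicator q ω := by
        intro ω
        by_cases hω : ω ∈ f ⁻¹' s <;> simp [Set.indicator_apply, hω]
      rw [integral_congr_ae (Filter.Eventually.of_forall fun ω => this ω),
        setIntegral_indicator hE, Set.inter_comm]
    rw [← left1, r1 s hs, right1]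
  -- conclude
  have h1 : ∫ ω in A, f ω * B.indicator (fun _ => (1:ℝ)) ω ∂ν
      = ∫ x, id x ∂((ν.restrict (A ∩ B)).map f) := by
    rw [integral_map hfm.aemeasurable aestronglyMeasurable_id]
    have : ∀ ω, f ω * B.indicator (fun _ => (1:ℝ)) ω = B.indicator f ω := by
      intro ω
      by_cases hω : ω ∈ B <;> simp [Set.indicator_apply, hω]
    rw [integral_congr_ae (Filter.Eventually.of_forall fun ω => this ω),
      setIntegral_indicator hB]
    rfl
  have h2 : ∫ x, id x ∂(((ν.restrict A).withDensity fun ω => ENNReal.ofReal (q ω)).map f)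
      = ∫ ω in A, f ω * q ω ∂ν := by
    rw [integral_map hfm.aemeasurable aestronglyMeasurable_id]
    have hdens : (fun ω => ENNReal.ofReal (q ω)) = fun ω => ((Real.toNNReal (q ω) : ℝ≥0) : ℝ≥0∞) :=
      rfl
    rw [hdens, integral_withDensity_eq_integral_smul
      (show Measurable fun ω => Real.toNNReal (q ω) from measurable_real_toNNReal.comp hq_meas)
      (fun x => id (f x))]
    refine integral_congr_ae ?_
    filter_upwards [ae_restrict_of_ae hq_nonneg] with ω hω
    show Real.toNNReal (q ω) • f ω = f ω * q ω
    rw [NNReal.smul_def, Real.coe_toNNReal _ hω, smul_eq_mul, mul_comm]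
  rw [h1, hlam, h2]


/-- Cluster randomized setting: the conditional expectation of the treated-branch contribution
given the graph satisfies μ[Y1·1{Z'=1} | σ(G)] = E[Y1]·π'(G) μ-a.s.,
where π'(x) = π + g(x)(1 − π). -/
theorem treated_branch_condexp_cluster
    {Ω : Type*} [MeasurableSpace Ω] [StandardBorelSpace Ω] [Nonempty Ω]
    (μ : Measure Ω) [IsProbabilityMeasure μ]
    {𝒲 : Type*} [MeasurableSpace 𝒲] [StandardBorelSpace 𝒲]
    {𝒢 : Type*} [MeasurableSpace 𝒢] [StandardBorelSpace 𝒢]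
    (W : Ω → 𝒲) (hW : Measurable W) (G : Ω → 𝒢) (hG : Measurable G)
    (Z Z' : Ω → ℝ) (hZ : Measurable Z) (hZ' : Measurable Z')
    (hZ01 : ∀ ω, Z ω = 0 ∨ Z ω = 1) (hZ'01 : ∀ ω, Z' ω = 0 ∨ Z' ω = 1)
    (Y0 Y1 Y : Ω → ℝ) (hY0 : Integrable Y0 μ) (hY1 : Integrable Y1 μ)
    (hYdef : ∀ ω, Y ω = Z' ω * Y1 ω + (1 - Z' ω) * Y0 ω)
    (π : ℝ) (hπ0 : 0 < π) (hπ1 : π < 1)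
    (ρ : 𝒲 × 𝒢 → ℝ) (hρmeas : Measurable ρ) (hρ01 : ∀ x, 0 ≤ ρ x ∧ ρ x < 1)
    (g : 𝒢 → ℝ) (hgmeas : Measurable g) (hg01 : ∀ x, 0 ≤ g x ∧ g x < 1)
    (ha : IndepFun Z G μ) (haπ : μ {ω | Z ω = 1} = ENNReal.ofReal π)
    (hb : ∀ᵐ ω ∂μ, Z ω = 1 → Z' ω = 1)
    (hc1 : IndepFun Y1 (fun ω => (Z ω, W ω, G ω)) μ)
    (hc0 : IndepFun Y0 (fun ω => (Z ω, W ω, G ω)) μ)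
    (hd0 : CondIndepFun (MeasurableSpace.comap (fun ω => (W ω, G ω)) inferInstance)
      (hW.prodMk hG).comap_le Y0 Z' (μ[|{ω | Z ω = 0}]))
    (hd1 : CondIndepFun (MeasurableSpace.comap (fun ω => (W ω, G ω)) inferInstance)
      (hW.prodMk hG).comap_le Y1 Z' (μ[|{ω | Z ω = 0}]))
    (hdρ : (μ[|{ω | Z ω = 0}])[fun ω => if Z' ω = 1 then (1:ℝ) else 0 |
        MeasurableSpace.comap (fun ω => (W ω, G ω)) inferInstance]
      =ᵐ[μ[|{ω | Z ω = 0}]] fun ω => ρ (W ω, G ω))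
    (he : (μ[|{ω | Z ω = 0}])[fun ω => ρ (W ω, G ω) | MeasurableSpace.comap G inferInstance]
      =ᵐ[μ[|{ω | Z ω = 0}]] fun ω => g (G ω)) :
    μ[fun ω => Y1 ω * (if Z' ω = 1 then (1:ℝ) else 0) | MeasurableSpace.comap G inferInstance]
      =ᵐ[μ] fun ω => (∫ ω', Y1 ω' ∂μ) * (π + g (G ω) * (1 - π)) := by
  classical
  -- notations
  have hWG : Measurable fun ω => (W ω, G ω) := hW.prodMk hG
  have hZWG : Measurable fun ω => (Z ω, W ω, G ω) := hZ.prodMk hWG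
  set c : ℝ := ∫ ω', Y1 ω' ∂μ with hcdef
  set s0 : Set Ω := {ω | Z ω = 0} with hs0def
  have hs0m : MeasurableSet s0 := hZ (measurableSet_singleton 0)
  have hs1m : MeasurableSet {ω | Z ω = 1} := hZ (measurableSet_singleton 1)
  have hs0compl : s0 = {ω | Z ω = 1}ᶜ := by
    ext ω
    rcases hZ01 ω with h | h <;> simp [hs0def, h]
  have h1π : (0:ℝ) < 1 - π := by linarith
  have hμs0 : μ s0 = ENNReal.ofReal (1 - π) := by
    rw [hs0compl, prob_compl_eq_one_sub hs1m, haπ, ENNReal.ofReal_sub _ hπ0.le,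
      ENNReal.ofReal_one]
  have hs0ne : μ s0 ≠ 0 := by
    rw [hμs0]
    simp only [ne_eq, ENNReal.ofReal_eq_zero, not_le]
    linarith
  set ν : Measure Ω := μ[|s0] with hνdef
  haveI hνprob : IsProbabilityMeasure ν := cond_isProbabilityMeasure hs0ne
  have hν_ac : ν ≪ μ := cond_absolutelyContinuous
  have hνeq : ν = (μ s0)⁻¹ • μ.restrict s0 := rfl
  -- integral conversion between ν and μ
  have hνint : ∀ h : Ω → ℝ, ∫ ω, h ω ∂ν = (1 - π)⁻¹ * ∫ ω in s0, h ω ∂μ := by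
    intro h
    rw [hνeq, integral_smul_measure, hμs0, ENNReal.toReal_inv,
      ENNReal.toReal_ofReal h1π.le, smul_eq_mul]
  have hνint' : ∀ h : Ω → ℝ, ∫ ω in s0, h ω ∂μ = (1 - π) * ∫ ω, h ω ∂ν := by
    intro h
    rw [hνint h]
    field_simp
  -- indicator integral helpers
  have hζ1 : ∫ ω, (if Z ω = 1 then (1:ℝ) else 0) ∂μ = π := by
    have hfeq : (fun ω => if Z ω = 1 then (1:ℝ) else 0)
        = Set.indicator {ω | Z ω = 1} (fun _ => (1:ℝ)) := by
      funext ω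
      by_cases h : Z ω = 1 <;> simp [Set.indicator_apply, h]
    rw [hfeq, integral_indicator hs1m, setIntegral_const, measureReal_def, haπ, smul_eq_mul, mul_one,
      ENNReal.toReal_ofReal hπ0.le]
  have hζ0 : ∫ ω, (if Z ω = 0 then (1:ℝ) else 0) ∂μ = 1 - π := by
    have hfeq : (fun ω => if Z ω = 0 then (1:ℝ) else 0)
        = Set.indicator s0 (fun _ => (1:ℝ)) := by
      funext ω
      by_cases h : Z ω = 0 <;> simp [hs0def, Set.indicator_apply, h]
    rw [hfeq, integral_indicator hs0m, setIntegral_const, measureReal_def, hμs0, smul_eq_mul, mul_one,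
      ENNReal.toReal_ofReal h1π.le]
  -- independence helpers
  have hIμ1 : ∀ φ : ℝ × 𝒲 × 𝒢 → ℝ, Measurable φ →
      ∫ ω, Y1 ω * φ (Z ω, W ω, G ω) ∂μ = c * ∫ ω, φ (Z ω, W ω, G ω) ∂μ := by
    intro φ hφ
    exact (hc1.comp measurable_id hφ).integral_fun_mul_eq_mul_integral hY1.1 (hφ.comp hZWG).aestronglyMeasurable
  have hIG : ∀ (ψ : 𝒢 → ℝ) (ξ : ℝ → ℝ), Measurable ψ → Measurable ξ →
      ∫ ω, ψ (G ω) * ξ (Z ω) ∂μ = (∫ ω, ψ (G ω) ∂μ) * ∫ ω, ξ (Z ω) ∂μ := by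
    intro ψ ξ hψ hξ
    exact (ha.symm.comp hψ hξ).integral_fun_mul_eq_mul_integral (hψ.comp hG).aestronglyMeasurable
      (hξ.comp hZ).aestronglyMeasurable
  -- Y1 is independent of (W, G) under ν
  have hsetx : ∀ t : Set (𝒲 × 𝒢), (fun ω => (W ω, G ω)) ⁻¹' t ∩ s0
      = (fun ω => (Z ω, W ω, G ω)) ⁻¹' ({(0:ℝ)} ×ˢ t) := by
    intro t
    ext ω
    simp [hs0def, Set.mem_prod, and_comm, eq_comm]
  have hIν : IndepFun Y1 (fun ω => (W ω, G ω)) ν := by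
    rw [indepFun_iff_measure_inter_preimage_eq_mul]
    intro u t hu ht
    have h1 := hc1.measure_inter_preimage_eq_mul u ({(0:ℝ)} ×ˢ t) hu
      ((measurableSet_singleton _).prod ht)
    have h2 := hc1.measure_inter_preimage_eq_mul u ({(0:ℝ)} ×ˢ (Set.univ : Set (𝒲 × 𝒢))) hu
      ((measurableSet_singleton _).prod MeasurableSet.univ)
    have hs0eq : (fun ω => (Z ω, W ω, G ω)) ⁻¹' ({(0:ℝ)} ×ˢ (Set.univ : Set (𝒲 × 𝒢))) = s0 := by
      ext ω
      simp [hs0def, eq_comm]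
    rw [hs0eq] at h2
    have e1 : s0 ∩ (Y1 ⁻¹' u ∩ (fun ω => (W ω, G ω)) ⁻¹' t)
        = Y1 ⁻¹' u ∩ ((fun ω => (W ω, G ω)) ⁻¹' t ∩ s0) := by
      ext ω
      simp only [Set.mem_inter_iff]
      tauto
    have e2 : s0 ∩ Y1 ⁻¹' u = Y1 ⁻¹' u ∩ s0 := Set.inter_comm _ _
    have e3 : s0 ∩ (fun ω => (W ω, G ω)) ⁻¹' t = (fun ω => (W ω, G ω)) ⁻¹' t ∩ s0 :=
      Set.inter_comm _ _
    rw [cond_apply hs0m, cond_apply hs0m, cond_apply hs0m, e1, hsetx t, h1, e2, h2, e3, hsetx t]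
    have hfin : μ s0 ≠ ⊤ := measure_ne_top μ s0
    calc (μ s0)⁻¹ * (μ (Y1 ⁻¹' u) * μ ((fun ω => (Z ω, W ω, G ω)) ⁻¹' ({(0:ℝ)} ×ˢ t)))
        = (μ (Y1 ⁻¹' u) * ((μ s0)⁻¹ * μ s0))
            * ((μ s0)⁻¹ * μ ((fun ω => (Z ω, W ω, G ω)) ⁻¹' ({(0:ℝ)} ×ˢ t))) := by
          rw [ENNReal.inv_mul_cancel hs0ne hfin]
          ring
      _ = (μ s0)⁻¹ * (μ (Y1 ⁻¹' u) * μ s0)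
            * ((μ s0)⁻¹ * μ ((fun ω => (Z ω, W ω, G ω)) ⁻¹' ({(0:ℝ)} ×ˢ t))) := by
          ring
  -- measurable modification of Y1
  clear hd0 hc0 hY0 hYdef
  have hY1aem : AEMeasurable Y1 μ := hY1.1.aemeasurable
  set Y' : Ω → ℝ := hY1aem.mk Y1 with hY'def
  have hY'm : Measurable Y' := hY1aem.measurable_mk
  have hY'ae : Y1 =ᵐ[μ] Y' := hY1aem.ae_eq_mk
  have hY'aeν : Y1 =ᵐ[ν] Y' := hY'ae.filter_mono hν_ac.ae_le
  have hd1' : CondIndepFun (MeasurableSpace.comap (fun ω => (W ω, G ω)) inferInstance)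
      hWG.comap_le Y' Z' ν := CondIndepFun.congr_left' hd1 hY'aeν
  have hB : MeasurableSet (Z' ⁻¹' {1}) := hZ' (measurableSet_singleton 1)
  have hχind : (fun ω => if Z' ω = 1 then (1:ℝ) else 0)
      = (Z' ⁻¹' {1}).indicator (fun _ => (1:ℝ)) := by
    funext ω
    by_cases h : Z' ω = 1 <;> simp [Set.indicator_apply, h]
  rw [hχind] at hdρ
  have hfam := (condIndepFun_iff_condExp_inter_preimage_eq_mul hY'm hZ').mp hd1'
  have hfam' : ∀ s : Set ℝ, MeasurableSet s →
      (ν⟦Y' ⁻¹' s ∩ Z' ⁻¹' {1} |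
          MeasurableSpace.comap (fun ω => (W ω, G ω)) inferInstance⟧)
        =ᵐ[ν] fun ω =>
          (ν⟦Y' ⁻¹' s | MeasurableSpace.comap (fun ω => (W ω, G ω)) inferInstance⟧) ω
            * (ν⟦Z' ⁻¹' {1} | MeasurableSpace.comap (fun ω => (W ω, G ω)) inferInstance⟧) ω :=
    fun s hs => hfam s {1} hs (measurableSet_singleton 1)
  -- integrability helpers
  have hbdd : ∀ (μ' : Measure Ω), Integrable Y1 μ' → ∀ u : Ω → ℝ, Measurable u →
      (∀ x, ‖u x‖ ≤ 1) → Integrable (fun ω => Y1 ω * u ω) μ' := by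
    intro μ' hInt u hu hub
    exact (hInt.bdd_mul hu.aestronglyMeasurable (Filter.Eventually.of_forall hub)).congr
      (Filter.Eventually.of_forall fun ω => mul_comm _ _)
  have hY1ν : Integrable Y1 ν := by
    rw [hνeq]
    exact (hY1.restrict).smul_measure (ENNReal.inv_ne_top.mpr hs0ne)
  have hgG_int : Integrable (fun ω => g (G ω)) μ := by
    refine Integrable.mono' (integrable_const (1:ℝ)) (hgmeas.comp hG).aestronglyMeasurable ?_
    refine Filter.Eventually.of_forall fun ω => ?_
    rw [Real.norm_eq_abs, abs_of_nonneg (hg01 _).1]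
    exact (hg01 _).2.le
  have hρWG_intν : Integrable (fun ω => ρ (W ω, G ω)) ν := by
    refine Integrable.mono' (integrable_const (1:ℝ)) (hρmeas.comp hWG).aestronglyMeasurable ?_
    refine Filter.Eventually.of_forall fun ω => ?_
    rw [Real.norm_eq_abs, abs_of_nonneg (hρ01 _).1]
    exact (hρ01 _).2.le
  have hχm : Measurable fun ω => if Z' ω = 1 then (1:ℝ) else 0 :=
    Measurable.ite (hZ' (measurableSet_singleton 1)) measurable_const measurable_const
  have hz1m : Measurable fun ω => if Z ω = 1 then (1:ℝ) else 0 :=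
    Measurable.ite (hZ (measurableSet_singleton 1)) measurable_const measurable_const
  have hz0m : Measurable fun ω => if Z ω = 0 then (1:ℝ) else 0 :=
    Measurable.ite (hZ (measurableSet_singleton 0)) measurable_const measurable_const
  have hf_int : Integrable (fun ω => Y1 ω * (if Z' ω = 1 then (1:ℝ) else 0)) μ :=
    hbdd μ hY1 _ hχm (fun x => by by_cases h : Z' x = 1 <;> simp [h])
  have hGm' : Measurable[MeasurableSpace.comap G inferInstance] G :=
    Measurable.of_comap_le le_rfl
  have hgm : StronglyMeasurable[MeasurableSpace.comap G inferInstance]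
      (fun ω => c * (π + g (G ω) * (1 - π))) :=
    ((measurable_const.add ((hgmeas.comp hGm').mul_const (1 - π))).const_mul c).stronglyMeasurable
  have hgfun_int : Integrable (fun ω => c * (π + g (G ω) * (1 - π))) μ := by
    refine Integrable.mono' (integrable_const (|c|))
      ((hgm.mono hG.comap_le).aestronglyMeasurable) ?_
    refine Filter.Eventually.of_forall fun ω => ?_
    rw [Real.norm_eq_abs, abs_mul]
    have h1 := (hg01 (G ω)).1
    have h2 := (hg01 (G ω)).2
    have hle : |π + g (G ω) * (1 - π)| ≤ 1 := by
      rw [abs_of_nonneg (by nlinarith)]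
      nlinarith
    calc |c| * |π + g (G ω) * (1 - π)| ≤ |c| * 1 := by
          exact mul_le_mul_of_nonneg_left hle (abs_nonneg c)
      _ = |c| := mul_one _
  -- main reduction
  refine (ae_eq_condExp_of_forall_setIntegral_eq hG.comap_le hf_int
    (fun s _ _ => hgfun_int.integrableOn) ?_ hgm.aestronglyMeasurable).symm
  rintro A' hA' -
  obtain ⟨B', hB', rfl⟩ := hA'
  set A : Set Ω := G ⁻¹' B' with hAdef
  have hAm : MeasurableSet A := hG hB'
  have hAmG : MeasurableSet[MeasurableSpace.comap G inferInstance] A := ⟨B', hB', hAdef.symm⟩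
  have hAm' : MeasurableSet[MeasurableSpace.comap (fun ω => (W ω, G ω)) inferInstance] A := by
    refine ⟨Set.univ ×ˢ B', MeasurableSet.univ.prod hB', ?_⟩
    ext ω
    simp [hAdef]
  -- LHS computation
  have hLHS : ∫ x in A, c * (π + g (G x) * (1 - π)) ∂μ
      = c * π * (μ A).toReal + c * (1 - π) * ∫ x in A, g (G x) ∂μ := by
    have hpt : ∀ x, c * (π + g (G x) * (1 - π)) = c * π + (c * (1 - π)) * g (G x) := by
      intro x
      ring
    rw [integral_congr_ae (Filter.Eventually.of_forall fun x => hpt x),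
      integral_add (integrable_const _).integrableOn ((hgG_int.const_mul _).integrableOn),
      setIntegral_const, integral_const_mul, smul_eq_mul, measureReal_def]
    ring
  -- split of RHS
  have hsplit : ∫ x in A, Y1 x * (if Z' x = 1 then (1:ℝ) else 0) ∂μ
      = ∫ x in A, Y1 x * ((if Z' x = 1 then (1:ℝ) else 0) * (if Z x = 1 then (1:ℝ) else 0)) ∂μ
        + ∫ x in A, Y1 x * ((if Z' x = 1 then (1:ℝ) else 0) * (if Z x = 0 then (1:ℝ) else 0)) ∂μ := by
    rw [← integral_add
      ((hbdd μ hY1 (fun x => (if Z' x = 1 then (1:ℝ) else 0) * (if Z x = 1 then (1:ℝ) else 0)) (hχm.mul hz1m) (fun x => by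
        by_cases h1 : Z' x = 1 <;> by_cases h2 : Z x = 1 <;> simp [h1, h2])).integrableOn)
      ((hbdd μ hY1 (fun x => (if Z' x = 1 then (1:ℝ) else 0) * (if Z x = 0 then (1:ℝ) else 0)) (hχm.mul hz0m) (fun x => by
        by_cases h1 : Z' x = 1 <;> by_cases h2 : Z x = 0 <;> simp [h1, h2])).integrableOn)]
    refine integral_congr_ae (Filter.Eventually.of_forall fun x => ?_)
    rcases hZ01 x with h | h <;> simp [h] <;> ring
  -- first piece
  have hI1 : ∫ x in A, Y1 x * ((if Z' x = 1 then (1:ℝ) else 0) * (if Z x = 1 then (1:ℝ) else 0)) ∂μ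
      = c * ((μ A).toReal * π) := by
    have e1 : ∫ x in A, Y1 x * ((if Z' x = 1 then (1:ℝ) else 0) * (if Z x = 1 then (1:ℝ) else 0)) ∂μ
        = ∫ x in A, Y1 x * (if Z x = 1 then (1:ℝ) else 0) ∂μ := by
      refine setIntegral_congr_ae hAm ?_
      filter_upwards [hb] with x hx _
      rcases hZ01 x with h | h
      · simp [h]
      · simp [h, hx h]
    have hφm : Measurable fun p : ℝ × 𝒲 × 𝒢 =>
        (if p.1 = 1 then (1:ℝ) else 0) * (if p.2.2 ∈ B' then (1:ℝ) else 0) :=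
      (Measurable.ite (measurable_fst (measurableSet_singleton 1)) measurable_const
        measurable_const).mul
        (Measurable.ite ((measurable_snd.comp measurable_snd) hB') measurable_const
          measurable_const)
    have e2 : ∫ x in A, Y1 x * (if Z x = 1 then (1:ℝ) else 0) ∂μ
        = ∫ ω, Y1 ω * ((fun p : ℝ × 𝒲 × 𝒢 =>
            (if p.1 = 1 then (1:ℝ) else 0) * (if p.2.2 ∈ B' then (1:ℝ) else 0))
              (Z ω, W ω, G ω)) ∂μ := by
      rw [← integral_indicator hAm]
      refine integral_congr_ae (Filter.Eventually.of_forall fun ω => ?_)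
      by_cases hω : ω ∈ A
      · simp [Set.indicator_apply, hω, show G ω ∈ B' from hω, mul_comm]
      · simp [Set.indicator_apply, hω, show G ω ∉ B' from hω]
    rw [e1, e2, hIμ1 _ hφm]
    have e3 : ∫ ω, (fun p : ℝ × 𝒲 × 𝒢 =>
        (if p.1 = 1 then (1:ℝ) else 0) * (if p.2.2 ∈ B' then (1:ℝ) else 0)) (Z ω, W ω, G ω) ∂μ
        = ∫ ω, (if G ω ∈ B' then (1:ℝ) else 0) * (if Z ω = 1 then (1:ℝ) else 0) ∂μ :=
      integral_congr_ae (Filter.Eventually.of_forall fun ω => mul_comm _ _)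
    have hψm : Measurable fun x : 𝒢 => if x ∈ B' then (1:ℝ) else 0 :=
      Measurable.ite hB' measurable_const measurable_const
    have hξm : Measurable fun z : ℝ => if z = 1 then (1:ℝ) else 0 :=
      Measurable.ite (measurableSet_singleton 1) measurable_const measurable_const
    have e4 := hIG (fun x => if x ∈ B' then (1:ℝ) else 0) (fun z => if z = 1 then (1:ℝ) else 0)
      hψm hξm
    have e5 : ∫ ω, (if G ω ∈ B' then (1:ℝ) else 0) ∂μ = (μ A).toReal := by
      have hfeq : (fun ω => if G ω ∈ B' then (1:ℝ) else 0) = A.indicator (fun _ => (1:ℝ)) := by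
        funext ω
        by_cases h : ω ∈ A
        · simp [Set.indicator_apply, h, show G ω ∈ B' from h]
        · simp [Set.indicator_apply, h, show G ω ∉ B' from h]
      rw [hfeq, integral_indicator hAm, setIntegral_const, smul_eq_mul, mul_one, measureReal_def]
    rw [e3, e4, e5, hζ1]
  have hI2 : ∫ x in A, Y1 x * ((if Z' x = 1 then (1:ℝ) else 0) * (if Z x = 0 then (1:ℝ) else 0)) ∂μ
      = (1 - π) * (c * ∫ x in A, g (G x) ∂μ) := by
    have ea : ∫ x in A, Y1 x * ((if Z' x = 1 then (1:ℝ) else 0) * (if Z x = 0 then (1:ℝ) else 0)) ∂μ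
        = ∫ x in s0, Y1 x * ((if Z' x = 1 then (1:ℝ) else 0) * (if G x ∈ B' then (1:ℝ) else 0)) ∂μ := by
      rw [← integral_indicator hAm, ← integral_indicator hs0m]
      refine integral_congr_ae (Filter.Eventually.of_forall fun ω => ?_)
      by_cases h1 : ω ∈ A <;> by_cases h2 : ω ∈ s0
      · simp [Set.indicator_apply, h1, h2, show G ω ∈ B' from h1, show Z ω = 0 from h2]
      · simp [Set.indicator_apply, h1, h2, show G ω ∈ B' from h1, show ¬ Z ω = 0 from h2]
      · simp [Set.indicator_apply, h1, h2, show G ω ∉ B' from h1, show Z ω = 0 from h2]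
      · simp [Set.indicator_apply, h1, h2, show G ω ∉ B' from h1, show ¬ Z ω = 0 from h2]
    rw [ea, hνint' _]
    congr 1
    have ec : ∫ ω, Y1 ω * ((if Z' ω = 1 then (1:ℝ) else 0) * (if G ω ∈ B' then (1:ℝ) else 0)) ∂ν
        = ∫ ω in A, Y1 ω * (if Z' ω = 1 then (1:ℝ) else 0) ∂ν := by
      rw [← integral_indicator hAm]
      refine integral_congr_ae (Filter.Eventually.of_forall fun ω => ?_)
      by_cases h1 : ω ∈ A
      · simp [Set.indicator_apply, h1, show G ω ∈ B' from h1]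
      · simp [Set.indicator_apply, h1, show G ω ∉ B' from h1]
    have ed : ∫ ω in A, Y1 ω * (if Z' ω = 1 then (1:ℝ) else 0) ∂ν
        = ∫ ω in A, Y' ω * (Z' ⁻¹' {1}).indicator (fun _ => (1:ℝ)) ω ∂ν := by
      refine integral_congr_ae ?_
      filter_upwards [ae_restrict_of_ae hY'aeν] with ω hω
      rw [hω]
      by_cases h : Z' ω = 1 <;> simp [Set.indicator_apply, h]
    have ekey := key_prod hWG.comap_le ν hY'm (hY1ν.congr hY'aeν) hB hfam' hAm'
    have ef : ∫ ω in A, Y' ω * (ν⟦Z' ⁻¹' {1} |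
          MeasurableSpace.comap (fun ω => (W ω, G ω)) inferInstance⟧) ω ∂ν
        = ∫ ω in A, Y1 ω * ρ (W ω, G ω) ∂ν := by
      refine integral_congr_ae ?_
      filter_upwards [ae_restrict_of_ae hdρ, ae_restrict_of_ae hY'aeν] with ω h1 h2
      rw [h1, ← h2]
    have hφ2 : Measurable fun p : 𝒲 × 𝒢 => ρ p * (if p.2 ∈ B' then (1:ℝ) else 0) :=
      hρmeas.mul (Measurable.ite (measurable_snd hB') measurable_const measurable_const)
    have eh : ∫ ω in A, Y1 ω * ρ (W ω, G ω) ∂ν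
        = ∫ ω, Y1 ω * ((fun p : 𝒲 × 𝒢 => ρ p * (if p.2 ∈ B' then (1:ℝ) else 0)) (W ω, G ω)) ∂ν := by
      rw [← integral_indicator hAm]
      refine integral_congr_ae (Filter.Eventually.of_forall fun ω => ?_)
      by_cases h1 : ω ∈ A
      · simp [Set.indicator_apply, h1, show G ω ∈ B' from h1]
      · simp [Set.indicator_apply, h1, show G ω ∉ B' from h1]
    have hIν2 : ∫ ω, Y1 ω * ((fun p : 𝒲 × 𝒢 => ρ p * (if p.2 ∈ B' then (1:ℝ) else 0)) (W ω, G ω)) ∂ν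
        = (∫ ω, Y1 ω ∂ν)
          * ∫ ω, (fun p : 𝒲 × 𝒢 => ρ p * (if p.2 ∈ B' then (1:ℝ) else 0)) (W ω, G ω) ∂ν :=
      (hIν.comp measurable_id hφ2).integral_fun_mul_eq_mul_integral hY1ν.1 ((hφ2.comp hWG).aestronglyMeasurable)
    have ej : ∫ ω, Y1 ω ∂ν = c := by
      have hz0φ : Measurable fun p : ℝ × 𝒲 × 𝒢 => if p.1 = 0 then (1:ℝ) else 0 :=
        Measurable.ite (measurable_fst (measurableSet_singleton 0)) measurable_const
          measurable_const
      have h1 : ∫ ω in s0, Y1 ω ∂μ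
          = ∫ ω, Y1 ω * ((fun p : ℝ × 𝒲 × 𝒢 =>
              if p.1 = 0 then (1:ℝ) else 0) (Z ω, W ω, G ω)) ∂μ := by
        rw [← integral_indicator hs0m]
        refine integral_congr_ae (Filter.Eventually.of_forall fun ω => ?_)
        by_cases h : ω ∈ s0
        · simp [Set.indicator_apply, h, show Z ω = 0 from h]
        · simp [Set.indicator_apply, h, show ¬ Z ω = 0 from h]
      have h2 : ∫ ω, (fun p : ℝ × 𝒲 × 𝒢 => if p.1 = 0 then (1:ℝ) else 0) (Z ω, W ω, G ω) ∂μ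
          = ∫ ω, (if Z ω = 0 then (1:ℝ) else 0) ∂μ :=
        integral_congr_ae (Filter.Eventually.of_forall fun ω => rfl)
      rw [hνint Y1, h1, hIμ1 _ hz0φ, h2, hζ0]
      field_simp
    have ek : ∫ ω, (fun p : 𝒲 × 𝒢 => ρ p * (if p.2 ∈ B' then (1:ℝ) else 0)) (W ω, G ω) ∂ν
        = ∫ ω in A, ρ (W ω, G ω) ∂ν := by
      rw [← integral_indicator hAm]
      refine integral_congr_ae (Filter.Eventually.of_forall fun ω => ?_)
      by_cases h1 : ω ∈ A
      · simp [Set.indicator_apply, h1, show G ω ∈ B' from h1]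
      · simp [Set.indicator_apply, h1, show G ω ∉ B' from h1]
    have el : ∫ ω in A, ρ (W ω, G ω) ∂ν = ∫ ω in A, g (G ω) ∂ν := by
      have h1 := setIntegral_condExp hG.comap_le hρWG_intν hAmG
      rw [← h1]
      exact integral_congr_ae (ae_restrict_of_ae he)
    have em : ∫ ω in A, g (G ω) ∂ν = ∫ x in A, g (G x) ∂μ := by
      have hψ : Measurable fun x : 𝒢 => g x * (if x ∈ B' then (1:ℝ) else 0) :=
        hgmeas.mul (Measurable.ite hB' measurable_const measurable_const)
      have hξ : Measurable fun z : ℝ => if z = 0 then (1:ℝ) else 0 :=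
        Measurable.ite (measurableSet_singleton 0) measurable_const measurable_const
      have q1 : ∫ ω in A, g (G ω) ∂ν = ∫ ω, g (G ω) * (if G ω ∈ B' then (1:ℝ) else 0) ∂ν := by
        rw [← integral_indicator hAm]
        refine integral_congr_ae (Filter.Eventually.of_forall fun ω => ?_)
        by_cases h1 : ω ∈ A
        · simp [Set.indicator_apply, h1, show G ω ∈ B' from h1]
        · simp [Set.indicator_apply, h1, show G ω ∉ B' from h1]
      have q2 : ∫ ω in s0, (g (G ω) * (if G ω ∈ B' then (1:ℝ) else 0)) ∂μ
          = ∫ ω, (g (G ω) * (if G ω ∈ B' then (1:ℝ) else 0)) * (if Z ω = 0 then (1:ℝ) else 0) ∂μ := by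
        rw [← integral_indicator hs0m]
        refine integral_congr_ae (Filter.Eventually.of_forall fun ω => ?_)
        by_cases h : ω ∈ s0
        · simp [Set.indicator_apply, h, show Z ω = 0 from h]
        · simp [Set.indicator_apply, h, show ¬ Z ω = 0 from h]
      have q2b : ∫ ω, (g (G ω) * (if G ω ∈ B' then (1:ℝ) else 0)) * (if Z ω = 0 then (1:ℝ) else 0) ∂μ
          = ∫ ω, (fun x : 𝒢 => g x * (if x ∈ B' then (1:ℝ) else 0)) (G ω)
              * ((fun z : ℝ => if z = 0 then (1:ℝ) else 0) (Z ω)) ∂μ :=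
        integral_congr_ae (Filter.Eventually.of_forall fun ω => rfl)
      have q3 := hIG (fun x : 𝒢 => g x * (if x ∈ B' then (1:ℝ) else 0))
        (fun z : ℝ => if z = 0 then (1:ℝ) else 0) hψ hξ
      have q4b : ∫ ω, (fun x : 𝒢 => g x * (if x ∈ B' then (1:ℝ) else 0)) (G ω) ∂μ
          = ∫ ω, g (G ω) * (if G ω ∈ B' then (1:ℝ) else 0) ∂μ :=
        integral_congr_ae (Filter.Eventually.of_forall fun ω => rfl)
      have q4c : ∫ ω, (fun z : ℝ => if z = 0 then (1:ℝ) else 0) (Z ω) ∂μ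
          = ∫ ω, (if Z ω = 0 then (1:ℝ) else 0) ∂μ :=
        integral_congr_ae (Filter.Eventually.of_forall fun ω => rfl)
      have q4 : ∫ ω, g (G ω) * (if G ω ∈ B' then (1:ℝ) else 0) ∂μ = ∫ x in A, g (G x) ∂μ := by
        rw [← integral_indicator hAm]
        refine integral_congr_ae (Filter.Eventually.of_forall fun ω => ?_)
        by_cases h1 : ω ∈ A
        · simp [Set.indicator_apply, h1, show G ω ∈ B' from h1]
        · simp [Set.indicator_apply, h1, show G ω ∉ B' from h1]
      rw [q1, hνint _, q2, q2b, q3, q4c, hζ0, q4b, q4]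
      field_simp
    rw [ec, ed, ekey, ef, eh, hIν2, ej, ek, el, em]
  rw [hLHS, hsplit, hI1, hI2]
  ring
end

section
/- Under assumptions (a)–(e) of the cluster randomized setting, the conditional expectation of the control-branch contribution given the graph satisfies μ[Y0 · 1{Z' = 0} | σ(G)] = E[Y0] · (1 − π'(G)) μ-almost surely, where π'(x) = π + g(x)(1 − π). -/
open MeasureTheory ProbabilityTheory

lemma condIndepFun_congr_left_aux {Ω β γ : Type*} {m : MeasurableSpace Ω}
    {mΩ : MeasurableSpace Ω} [StandardBorelSpace Ω] [MeasurableSpace β] [MeasurableSpace γ]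
    (hm : m ≤ mΩ) {μ : Measure Ω} [IsFiniteMeasure μ]
    {f f' : Ω → β} {g : Ω → γ}
    (h : CondIndepFun m hm f g μ) (hff' : f =ᵐ[μ] f') :
    CondIndepFun m hm f' g μ := by
  obtain ⟨N, hsub, hNmeas, hNnull⟩ :=
    exists_measurable_superset_of_null (s := {x | f x ≠ f' x}) hff'
  have hind : (fun ω => (condExpKernel μ m ω N).toReal) =ᵐ[μ] μ⟦N | m⟧ :=
    condExpKernel_ae_eq_condExp hm hNmeas
  have hind0 : (μ⟦N | m⟧) =ᵐ[μ] 0 := by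
    have : (Set.indicator N fun _ => (1:ℝ)) =ᵐ[μ] 0 := by
      filter_upwards [measure_eq_zero_iff_ae_notMem.mp hNnull] with x hx
      simp [Set.indicator_of_notMem hx]
    exact (condExp_congr_ae this).trans (by rw [condExp_zero])
  have hker0 : ∀ᵐ ω ∂μ, condExpKernel μ m ω N = 0 := by
    filter_upwards [hind.trans hind0] with ω hω
    simp only [Pi.zero_apply] at hω
    rcases ENNReal.toReal_eq_zero_iff _ |>.mp hω with h0 | htop
    · exact h0
    · exact absurd htop (measure_ne_top _ _)
  have hmeasK : Measurable[m] (fun ω => condExpKernel μ m ω N) :=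
    measurable_condExpKernel hNmeas
  have hS : MeasurableSet[m] {ω | condExpKernel μ m ω N = 0} :=
    hmeasK (measurableSet_singleton 0)
  have htrim : ∀ᵐ ω ∂(μ.trim hm), condExpKernel μ m ω N = 0 := by
    rw [ae_iff]
    have : {ω | ¬ condExpKernel μ m ω N = 0} = {ω | condExpKernel μ m ω N = 0}ᶜ := rfl
    rw [this, trim_measurableSet_eq hm hS.compl]
    exact ae_iff.mp hker0
  refine Kernel.IndepFun.congr' h ?_ (Filter.Eventually.of_forall fun _ => .rfl)
  filter_upwards [htrim] with ω hω
  have : condExpKernel μ m ω {x | f x ≠ f' x} = 0 :=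
    le_antisymm (hω ▸ measure_mono hsub) bot_le
  exact this

/-- Cluster randomized setting: the conditional expectation of the control-branch contribution
given the graph satisfies μ[Y0·1{Z'=0} | σ(G)] = E[Y0]·(1 − π'(G)) μ-a.s.,
where π'(x) = π + g(x)(1 − π). -/
theorem control_branch_condexp_cluster
    {Ω : Type*} [MeasurableSpace Ω] [StandardBorelSpace Ω] [Nonempty Ω]
    (μ : Measure Ω) [IsProbabilityMeasure μ]
    {𝒲 : Type*} [MeasurableSpace 𝒲] [StandardBorelSpace 𝒲]
    {𝒢 : Type*} [MeasurableSpace 𝒢] [StandardBorelSpace 𝒢]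
    (W : Ω → 𝒲) (hW : Measurable W) (G : Ω → 𝒢) (hG : Measurable G)
    (Z Z' : Ω → ℝ) (hZ : Measurable Z) (hZ' : Measurable Z')
    (hZ01 : ∀ ω, Z ω = 0 ∨ Z ω = 1) (hZ'01 : ∀ ω, Z' ω = 0 ∨ Z' ω = 1)
    (Y0 Y1 Y : Ω → ℝ) (hY0 : Integrable Y0 μ) (hY1 : Integrable Y1 μ)
    (hYdef : ∀ ω, Y ω = Z' ω * Y1 ω + (1 - Z' ω) * Y0 ω)
    (π : ℝ) (hπ0 : 0 < π) (hπ1 : π < 1)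
    (ρ : 𝒲 × 𝒢 → ℝ) (hρmeas : Measurable ρ) (hρ01 : ∀ x, 0 ≤ ρ x ∧ ρ x < 1)
    (g : 𝒢 → ℝ) (hgmeas : Measurable g) (hg01 : ∀ x, 0 ≤ g x ∧ g x < 1)
    (ha : IndepFun Z G μ) (haπ : μ {ω | Z ω = 1} = ENNReal.ofReal π)
    (hb : ∀ᵐ ω ∂μ, Z ω = 1 → Z' ω = 1)
    (hc1 : IndepFun Y1 (fun ω => (Z ω, W ω, G ω)) μ)
    (hc0 : IndepFun Y0 (fun ω => (Z ω, W ω, G ω)) μ)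
    (hd0 : CondIndepFun (MeasurableSpace.comap (fun ω => (W ω, G ω)) inferInstance)
      (hW.prodMk hG).comap_le Y0 Z' (μ[|{ω | Z ω = 0}]))
    (hd1 : CondIndepFun (MeasurableSpace.comap (fun ω => (W ω, G ω)) inferInstance)
      (hW.prodMk hG).comap_le Y1 Z' (μ[|{ω | Z ω = 0}]))
    (hdρ : (μ[|{ω | Z ω = 0}])[fun ω => if Z' ω = 1 then (1:ℝ) else 0 |
        MeasurableSpace.comap (fun ω => (W ω, G ω)) inferInstance]
      =ᵐ[μ[|{ω | Z ω = 0}]] fun ω => ρ (W ω, G ω))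
    (he : (μ[|{ω | Z ω = 0}])[fun ω => ρ (W ω, G ω) | MeasurableSpace.comap G inferInstance]
      =ᵐ[μ[|{ω | Z ω = 0}]] fun ω => g (G ω)) :
    μ[fun ω => Y0 ω * (if Z' ω = 0 then (1:ℝ) else 0) | MeasurableSpace.comap G inferInstance]
      =ᵐ[μ] fun ω => (∫ ω', Y0 ω' ∂μ) * (1 - (π + g (G ω) * (1 - π))) := by
  classical
  have hmGle : MeasurableSpace.comap G inferInstance ≤ ‹MeasurableSpace Ω› := hG.comap_le
  have hm1le : MeasurableSpace.comap (fun ω => (W ω, G ω)) inferInstance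
      ≤ ‹MeasurableSpace Ω› := (hW.prodMk hG).comap_le
  set sZ : Set Ω := {ω | Z ω = 0} with hsZdef
  have hsZm : MeasurableSet sZ := hZ (measurableSet_singleton 0)
  -- measure of sZ
  have hμsZ : μ sZ = ENNReal.ofReal (1 - π) := by
    have hcompl : μ sZᶜ = ENNReal.ofReal π := by
      rw [← haπ]; congr 1
      ext ω
      simp only [Set.mem_compl_iff, Set.mem_setOf_eq, hsZdef]
      rcases hZ01 ω with h | h <;> simp [h]
    have hadd : μ sZ + μ sZᶜ = 1 := by
      rw [measure_add_measure_compl hsZm, measure_univ]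
    rw [hcompl] at hadd
    have := ENNReal.eq_sub_of_add_eq ENNReal.ofReal_ne_top hadd
    rw [this, ← ENNReal.ofReal_one, ← ENNReal.ofReal_sub _ hπ0.le]
  have hsZne : μ sZ ≠ 0 := by
    rw [hμsZ]; simp only [ne_eq, ENNReal.ofReal_eq_zero, not_le]; linarith
  set ν : Measure Ω := μ[|sZ] with hνdef
  haveI hνprob : IsProbabilityMeasure ν := cond_isProbabilityMeasure hsZne
  have hν_ac : ν ≪ μ := cond_absolutelyContinuous
  have hcond : ∀ t : Set Ω, μ (sZ ∩ t) = μ sZ * ν t := by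
    intro t
    rw [hνdef, cond_apply hsZm, ← mul_assoc,
      ENNReal.mul_inv_cancel hsZne (measure_ne_top μ sZ), one_mul]
  -- measurable representative of Y0
  set Y0' : Ω → ℝ := hY0.1.mk Y0 with hY0'def
  have hY0'sm : StronglyMeasurable Y0' := hY0.1.stronglyMeasurable_mk
  have hY0'meas : Measurable Y0' := hY0'sm.measurable
  have heq : Y0 =ᵐ[μ] Y0' := hY0.1.ae_eq_mk
  have heqν : Y0 =ᵐ[ν] Y0' := heq.filter_mono hν_ac.ae_le
  have hY0'int : Integrable Y0' μ := hY0.congr heq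
  -- sZ as a preimage of the triple map
  have hsZrect : sZ = (fun ω => (Z ω, W ω, G ω)) ⁻¹' ({(0:ℝ)} ×ˢ (Set.univ : Set (𝒲 × 𝒢))) := by
    ext ω; simp [hsZdef, eq_comm]
  have htri : Measurable (fun ω => (Z ω, W ω, G ω)) := hZ.prodMk (hW.prodMk hG)
  have hc0' : IndepFun Y0' (fun ω => (Z ω, W ω, G ω)) μ :=
    hc0.congr heq Filter.EventuallyEq.rfl
  have hrect := indepFun_iff_measure_inter_preimage_eq_mul.mp hc0'
  have hν_t2 : ∀ s' : Set ℝ, MeasurableSet s' → ν (Y0' ⁻¹' s') = μ (Y0' ⁻¹' s') := by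
    intro s' hs'
    have h2 : μ (Y0' ⁻¹' s' ∩ sZ) = μ (Y0' ⁻¹' s') * μ sZ := by
      rw [hsZrect]
      exact hrect s' _ hs' ((measurableSet_singleton 0).prod MeasurableSet.univ)
    have h1 : μ sZ * ν (Y0' ⁻¹' s') = μ (Y0' ⁻¹' s') * μ sZ := by
      rw [← hcond, Set.inter_comm]; exact h2
    rw [mul_comm (μ (Y0' ⁻¹' s'))] at h1
    exact (ENNReal.mul_right_inj hsZne (measure_ne_top μ sZ)).mp h1
  -- independence of Y0' and (W, G) under ν
  have hWGsZ : ∀ E : Set (𝒲 × 𝒢), sZ ∩ (fun ω => (W ω, G ω)) ⁻¹' E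
      = (fun ω => (Z ω, W ω, G ω)) ⁻¹' ({(0:ℝ)} ×ˢ E) := by
    intro E; ext ω; simp [hsZdef, eq_comm, and_comm]
  have hindep : Indep (MeasurableSpace.comap Y0' inferInstance) (MeasurableSpace.comap (fun ω => (W ω, G ω)) inferInstance) ν := by
    rw [Indep_iff]
    rintro t1 t2 ⟨s', hs', rfl⟩ ⟨E, hE, rfl⟩
    have hν12 : ν (Y0' ⁻¹' s' ∩ (fun ω => (W ω, G ω)) ⁻¹' E)
        = (μ sZ)⁻¹ * μ (sZ ∩ (Y0' ⁻¹' s' ∩ (fun ω => (W ω, G ω)) ⁻¹' E)) := by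
      rw [hνdef, cond_apply hsZm]
    have hset : sZ ∩ (Y0' ⁻¹' s' ∩ (fun ω => (W ω, G ω)) ⁻¹' E)
        = Y0' ⁻¹' s' ∩ ((fun ω => (Z ω, W ω, G ω)) ⁻¹' ({(0:ℝ)} ×ˢ E)) := by
      rw [Set.inter_left_comm, hWGsZ]
    have hfact : μ (Y0' ⁻¹' s' ∩ ((fun ω => (Z ω, W ω, G ω)) ⁻¹' ({(0:ℝ)} ×ˢ E)))
        = μ (Y0' ⁻¹' s') * μ ((fun ω => (Z ω, W ω, G ω)) ⁻¹' ({(0:ℝ)} ×ˢ E)) :=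
      hrect s' _ hs' ((measurableSet_singleton 0).prod hE)
    have hμWG : μ ((fun ω => (Z ω, W ω, G ω)) ⁻¹' ({(0:ℝ)} ×ˢ E))
        = μ sZ * ν ((fun ω => (W ω, G ω)) ⁻¹' E) := by
      rw [← hWGsZ, hcond]
    rw [hν12, hset, hfact, hμWG, hν_t2 s' hs']
    calc (μ sZ)⁻¹ * (μ (Y0' ⁻¹' s') * (μ sZ * ν ((fun ω => (W ω, G ω)) ⁻¹' E)))
        = ((μ sZ)⁻¹ * μ sZ) * (μ (Y0' ⁻¹' s') * ν ((fun ω => (W ω, G ω)) ⁻¹' E)) := by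
          ring
      _ = μ (Y0' ⁻¹' s') * ν ((fun ω => (W ω, G ω)) ⁻¹' E) := by
          rw [ENNReal.inv_mul_cancel hsZne (measure_ne_top μ sZ), one_mul]
  -- conditional expectation of Y0'-indicators is constant
  haveI : SigmaFinite (ν.trim hm1le) := by
    have : IsFiniteMeasure (ν.trim hm1le) := by
      constructor
      rw [trim_measurableSet_eq hm1le (@MeasurableSet.univ _ (MeasurableSpace.comap (fun ω => (W ω, G ω)) inferInstance))]
      exact measure_lt_top ν _
    infer_instance
  have hconst : ∀ s' : Set ℝ, MeasurableSet s' →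
      (ν⟦Y0' ⁻¹' s' | MeasurableSpace.comap (fun ω => (W ω, G ω)) inferInstance⟧) =ᵐ[ν] fun _ => (μ (Y0' ⁻¹' s')).toReal := by
    intro s' hs'
    have hsm : StronglyMeasurable[MeasurableSpace.comap Y0' inferInstance]
        (Set.indicator (Y0' ⁻¹' s') fun _ => (1:ℝ)) :=
      stronglyMeasurable_const.indicator ⟨s', hs', rfl⟩
    have h := condExp_indep_eq hY0'meas.comap_le hm1le hsm hindep
    have hval : ∫ x, Set.indicator (Y0' ⁻¹' s') (fun _ => (1:ℝ)) x ∂ν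
        = (μ (Y0' ⁻¹' s')).toReal := by
      rw [← hν_t2 s' hs']
      exact integral_indicator_one (hY0'meas hs')
    refine h.trans ?_
    rw [hval]
  -- conditional independence product formula
  have hd0'' : CondIndepFun (MeasurableSpace.comap (fun ω => (W ω, G ω)) inferInstance) hm1le Y0' Z' ν :=
    condIndepFun_congr_left_aux hm1le hd0 heqν
  have hprodgen := (condIndepFun_iff_condExp_inter_preimage_eq_mul
      (μ := ν) hY0'meas hZ').mp hd0''
  -- membership of G-sets in the sigma-algebras
  have hs_m1 : ∀ (A : Set 𝒢), MeasurableSet A → MeasurableSet[MeasurableSpace.comap (fun ω => (W ω, G ω)) inferInstance] (G ⁻¹' A) := by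
    intro A hA
    exact ⟨Set.univ ×ˢ A, MeasurableSet.univ.prod hA, by ext ω; simp⟩
  have hs_mG : ∀ (A : Set 𝒢), MeasurableSet A → MeasurableSet[MeasurableSpace.comap G inferInstance] (G ⁻¹' A) := by
    intro A hA; exact ⟨A, hA, rfl⟩
  set C2 : Set Ω := Z' ⁻¹' {0} with hC2def
  have hC2m : MeasurableSet C2 := hZ' (measurableSet_singleton 0)
  -- step K3: transfer rho to g on G-sets under ν
  have hf1eq : (fun ω => if Z' ω = 1 then (1:ℝ) else 0)
      = Set.indicator (Z' ⁻¹' {1}) (fun _ => (1:ℝ)) := by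
    funext ω
    simp [Set.indicator_apply]
  have hf1int : Integrable (fun ω => if Z' ω = 1 then (1:ℝ) else 0) ν := by
    rw [hf1eq]
    exact (integrable_const 1).indicator (hZ' (measurableSet_singleton 1))
  have hρint : Integrable (fun ω => ρ (W ω, G ω)) ν := by
    refine Integrable.mono' (integrable_const 1)
      ((hρmeas.comp (hW.prodMk hG)).aestronglyMeasurable) ?_
    filter_upwards with ω
    rw [Real.norm_eq_abs, abs_le]
    constructor
    · linarith [(hρ01 (W ω, G ω)).1]
    · linarith [(hρ01 (W ω, G ω)).2]
  have hK3 : ∀ (A : Set 𝒢), MeasurableSet A →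
      ∫ x in G ⁻¹' A, (if Z' x = 1 then (1:ℝ) else 0) ∂ν
        = ∫ x in G ⁻¹' A, g (G x) ∂ν := by
    intro A hA
    have e1 : ∫ x in G ⁻¹' A, (if Z' x = 1 then (1:ℝ) else 0) ∂ν
        = ∫ x in G ⁻¹' A, (ν[fun ω => if Z' ω = 1 then (1:ℝ) else 0 | MeasurableSpace.comap (fun ω => (W ω, G ω)) inferInstance]) x ∂ν :=
      (setIntegral_condExp hm1le hf1int (hs_m1 A hA)).symm
    have e2 : ∫ x in G ⁻¹' A, (ν[fun ω => if Z' ω = 1 then (1:ℝ) else 0 | MeasurableSpace.comap (fun ω => (W ω, G ω)) inferInstance]) x ∂ν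
        = ∫ x in G ⁻¹' A, ρ (W x, G x) ∂ν := by
      refine setIntegral_congr_ae (hm1le _ (hs_m1 A hA)) ?_
      filter_upwards [hdρ] with x hx _
      exact hx
    have e3 : ∫ x in G ⁻¹' A, ρ (W x, G x) ∂ν
        = ∫ x in G ⁻¹' A, (ν[fun ω => ρ (W ω, G ω) | MeasurableSpace.comap G inferInstance]) x ∂ν :=
      (setIntegral_condExp hmGle hρint (hs_mG A hA)).symm
    have e4 : ∫ x in G ⁻¹' A, (ν[fun ω => ρ (W ω, G ω) | MeasurableSpace.comap G inferInstance]) x ∂ν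
        = ∫ x in G ⁻¹' A, g (G x) ∂ν := by
      refine setIntegral_congr_ae (hmGle _ (hs_mG A hA)) ?_
      filter_upwards [he] with x hx _
      exact hx
    rw [e1, e2, e3, e4]
  -- step K4
  have hgbound : ∀ x : Ω, ‖1 - g (G x)‖ ≤ 1 := by
    intro x
    rw [Real.norm_eq_abs, abs_le]
    constructor
    · linarith [(hg01 (G x)).2]
    · linarith [(hg01 (G x)).1]
  have hgGint : Integrable (fun x => g (G x)) ν := by
    refine Integrable.mono' (integrable_const 1)
      ((hgmeas.comp hG).aestronglyMeasurable) ?_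
    filter_upwards with x
    rw [Real.norm_eq_abs, abs_le]
    constructor
    · linarith [(hg01 (G x)).1]
    · linarith [(hg01 (G x)).2]
  have hK4 : ∀ (A : Set 𝒢), MeasurableSet A →
      (ν (C2 ∩ G ⁻¹' A)).toReal = ∫ x in G ⁻¹' A, (1 - g (G x)) ∂ν := by
    intro A hA
    have e1 : (ν (C2 ∩ G ⁻¹' A)).toReal
        = ∫ x in G ⁻¹' A, Set.indicator C2 (fun _ => (1:ℝ)) x ∂ν := by
      rw [← Measure.restrict_apply hC2m]
      exact (integral_indicator_one hC2m).symm
    have e2 : ∀ x : Ω, Set.indicator C2 (fun _ => (1:ℝ)) x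
        = 1 - (if Z' x = 1 then (1:ℝ) else 0) := by
      intro x
      rcases hZ'01 x with h | h <;> simp [Set.indicator_apply, hC2def, h]
    rw [e1]
    calc ∫ x in G ⁻¹' A, Set.indicator C2 (fun _ => (1:ℝ)) x ∂ν
        = ∫ x in G ⁻¹' A, (1 - (if Z' x = 1 then (1:ℝ) else 0)) ∂ν := by
          exact setIntegral_congr_ae (hG hA) (Filter.Eventually.of_forall fun x _ => e2 x)
      _ = ∫ x in G ⁻¹' A, (1:ℝ) ∂ν - ∫ x in G ⁻¹' A, (if Z' x = 1 then (1:ℝ) else 0) ∂ν := by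
          exact integral_sub (integrable_const 1).integrableOn hf1int.integrableOn
      _ = ∫ x in G ⁻¹' A, (1:ℝ) ∂ν - ∫ x in G ⁻¹' A, g (G x) ∂ν := by rw [hK3 A hA]
      _ = ∫ x in G ⁻¹' A, (1 - g (G x)) ∂ν := by
          rw [← integral_sub (integrable_const 1).integrableOn hgGint.integrableOn]
  -- step K5
  have hK5 : ∀ (A : Set 𝒢), MeasurableSet A → ∀ (s' : Set ℝ), MeasurableSet s' →
      ν ((Y0' ⁻¹' s' ∩ C2) ∩ G ⁻¹' A) = μ (Y0' ⁻¹' s') * ν (C2 ∩ G ⁻¹' A) := by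
    intro A hA s' hs'
    have hTm : MeasurableSet (Y0' ⁻¹' s' ∩ C2) := (hY0'meas hs').inter hC2m
    have hTint : Integrable (Set.indicator (Y0' ⁻¹' s' ∩ C2) fun _ => (1:ℝ)) ν :=
      (integrable_const 1).indicator hTm
    have hC2int : Integrable (Set.indicator C2 fun _ => (1:ℝ)) ν :=
      (integrable_const 1).indicator hC2m
    have e1 : (ν ((Y0' ⁻¹' s' ∩ C2) ∩ G ⁻¹' A)).toReal
        = ∫ x in G ⁻¹' A, Set.indicator (Y0' ⁻¹' s' ∩ C2) (fun _ => (1:ℝ)) x ∂ν := by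
      rw [← Measure.restrict_apply hTm]
      exact (integral_indicator_one hTm).symm
    have e2 : ∫ x in G ⁻¹' A, Set.indicator (Y0' ⁻¹' s' ∩ C2) (fun _ => (1:ℝ)) x ∂ν
        = ∫ x in G ⁻¹' A, (ν⟦Y0' ⁻¹' s' ∩ C2 | MeasurableSpace.comap (fun ω => (W ω, G ω)) inferInstance⟧) x ∂ν :=
      (setIntegral_condExp hm1le hTint (hs_m1 A hA)).symm
    have e3 : ∫ x in G ⁻¹' A, (ν⟦Y0' ⁻¹' s' ∩ C2 | MeasurableSpace.comap (fun ω => (W ω, G ω)) inferInstance⟧) x ∂ν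
        = ∫ x in G ⁻¹' A, ((μ (Y0' ⁻¹' s')).toReal * (ν⟦C2 | MeasurableSpace.comap (fun ω => (W ω, G ω)) inferInstance⟧) x) ∂ν := by
      refine setIntegral_congr_ae (hm1le _ (hs_m1 A hA)) ?_
      filter_upwards [hprodgen s' {0} hs' (measurableSet_singleton 0),
        hconst s' hs'] with x hx1 hx2 _
      rw [hx1, hx2]
    have e4 : ∫ x in G ⁻¹' A, ((μ (Y0' ⁻¹' s')).toReal * (ν⟦C2 | MeasurableSpace.comap (fun ω => (W ω, G ω)) inferInstance⟧) x) ∂ν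
        = (μ (Y0' ⁻¹' s')).toReal * ∫ x in G ⁻¹' A, (ν⟦C2 | MeasurableSpace.comap (fun ω => (W ω, G ω)) inferInstance⟧) x ∂ν :=
      by rw [integral_const_mul]
    have e5 : ∫ x in G ⁻¹' A, (ν⟦C2 | MeasurableSpace.comap (fun ω => (W ω, G ω)) inferInstance⟧) x ∂ν
        = ∫ x in G ⁻¹' A, Set.indicator C2 (fun _ => (1:ℝ)) x ∂ν :=
      setIntegral_condExp hm1le hC2int (hs_m1 A hA)
    have e6 : ∫ x in G ⁻¹' A, Set.indicator C2 (fun _ => (1:ℝ)) x ∂ν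
        = (ν (C2 ∩ G ⁻¹' A)).toReal := by
      rw [← Measure.restrict_apply hC2m]
      exact integral_indicator_one hC2m
    have ereal : (ν ((Y0' ⁻¹' s' ∩ C2) ∩ G ⁻¹' A)).toReal
        = ((μ (Y0' ⁻¹' s')) * ν (C2 ∩ G ⁻¹' A)).toReal := by
      rw [e1, e2, e3, e4, e5, e6, ENNReal.toReal_mul]
    exact (ENNReal.toReal_eq_toReal_iff' (measure_ne_top ν _)
      (ENNReal.mul_ne_top (measure_ne_top μ _) (measure_ne_top ν _))).mp ereal
  -- null complement fact
  have hbnull : μ {ω | ¬ (Z ω = 1 → Z' ω = 1)} = 0 := ae_iff.mp hb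
  have hnullZ' : ∀ X : Set Ω, X ⊆ C2 → μ X = μ (sZ ∩ X) := by
    intro X hX
    have h1 : μ (X \ sZ) = 0 := by
      refine measure_mono_null ?_ hbnull
      intro ω hω
      have hZω : Z ω = 1 := by
        rcases hZ01 ω with h | h
        · exact absurd h hω.2
        · exact h
      have hZ'ω : Z' ω = 0 := hX hω.1
      intro himp
      exact absurd (himp hZω) (by rw [hZ'ω]; norm_num)
    calc μ X = μ (X ∩ sZ) + μ (X \ sZ) := (measure_inter_add_diff X hsZm).symm
      _ = μ (X ∩ sZ) := by rw [h1, add_zero]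
      _ = μ (sZ ∩ X) := by rw [Set.inter_comm]
  -- step K6: key independence identity under μ
  have hkey : ∀ (A : Set 𝒢), MeasurableSet A → ∀ (s' : Set ℝ), MeasurableSet s' →
      μ (Y0' ⁻¹' s' ∩ (C2 ∩ G ⁻¹' A)) = μ (Y0' ⁻¹' s') * μ (C2 ∩ G ⁻¹' A) := by
    intro A hA s' hs'
    have hsub : Y0' ⁻¹' s' ∩ (C2 ∩ G ⁻¹' A) ⊆ C2 := fun x hx => hx.2.1
    have hsub2 : C2 ∩ G ⁻¹' A ⊆ C2 := Set.inter_subset_left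
    rw [hnullZ' _ hsub, hcond, hnullZ' _ hsub2, hcond, ← Set.inter_assoc,
      hK5 A hA s' hs']
    ring
  -- integrand facts
  have hind0eq : (fun ω => if Z' ω = 0 then (1:ℝ) else 0)
      = Set.indicator C2 (fun _ => (1:ℝ)) := by
    funext ω; simp [Set.indicator_apply, hC2def]
  have hfint : Integrable (fun ω => Y0 ω * (if Z' ω = 0 then (1:ℝ) else 0)) μ := by
    have h1 : Integrable (fun ω => (if Z' ω = 0 then (1:ℝ) else 0) * Y0 ω) μ := by
      refine Integrable.bdd_mul (c := 1) hY0 ?_ (Filter.Eventually.of_forall ?_)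
      · rw [hind0eq]
        exact (measurable_const.indicator hC2m).aestronglyMeasurable
      · intro x; split_ifs <;> simp
    exact h1.congr (Filter.Eventually.of_forall fun x => mul_comm _ _)
  -- measurability of the target function
  have hGm : @Measurable Ω 𝒢 (MeasurableSpace.comap G inferInstance) _ G :=
    fun t ht => ⟨t, ht, rfl⟩
  have hφm : @Measurable Ω ℝ (MeasurableSpace.comap G inferInstance) _
      (fun ω => (∫ ω', Y0 ω' ∂μ) * (1 - (π + g (G ω) * (1 - π)))) := by
    exact measurable_const.mul
      (measurable_const.sub (measurable_const.add ((hgmeas.comp hGm).mul measurable_const)))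
  have hφSM : StronglyMeasurable[MeasurableSpace.comap G inferInstance]
      (fun ω => (∫ ω', Y0 ω' ∂μ) * (1 - (π + g (G ω) * (1 - π)))) :=
    Measurable.stronglyMeasurable hφm
  have hφint : Integrable (fun ω => (∫ ω', Y0 ω' ∂μ) * (1 - (π + g (G ω) * (1 - π)))) μ := by
    refine Integrable.mono' (integrable_const (|∫ ω', Y0 ω' ∂μ| * 2))
      (hφSM.mono hmGle).aestronglyMeasurable ?_
    filter_upwards with x
    rw [Real.norm_eq_abs, abs_mul]
    refine mul_le_mul_of_nonneg_left ?_ (abs_nonneg _)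
    rw [abs_le]
    constructor <;> nlinarith [(hg01 (G x)).1, (hg01 (G x)).2]
  -- the K9 transfer identity
  have htoRne : (μ sZ).toReal ≠ 0 := by
    rw [hμsZ, ENNReal.toReal_ofReal (by linarith)]
    intro h; linarith [h]
  have htrans : ∀ (A : Set 𝒢), MeasurableSet A →
      ∫ x in G ⁻¹' A, (1 - g (G x)) ∂ν = ∫ x in G ⁻¹' A, (1 - g (G x)) ∂μ := by
    intro A hA
    have hres : ν.restrict (G ⁻¹' A) = (μ sZ)⁻¹ • μ.restrict (G ⁻¹' A ∩ sZ) := by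
      have hν' : ν = (μ sZ)⁻¹ • μ.restrict sZ := rfl
      rw [hν', Measure.restrict_smul, Measure.restrict_restrict (hG hA)]
    have hres2 : ∫ x in G ⁻¹' A, (1 - g (G x)) ∂ν
        = (μ sZ)⁻¹.toReal * ∫ x in G ⁻¹' A ∩ sZ, (1 - g (G x)) ∂μ := by
      rw [hres, integral_smul_measure, smul_eq_mul]
    have hφ1m : Measurable (fun z : ℝ => if z = 0 then (1:ℝ) else 0) :=
      Measurable.ite measurableSet_eq measurable_const measurable_const
    have hφ2m : Measurable (fun x : 𝒢 => (1 - g x) * (if x ∈ A then (1:ℝ) else 0)) :=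
      (measurable_const.sub hgmeas).mul
        (Measurable.ite hA measurable_const measurable_const)
    have hindZG := ha.comp hφ1m hφ2m
    have hφ1Zeq : (fun z : ℝ => if z = 0 then (1:ℝ) else 0) ∘ Z
        = Set.indicator sZ (fun _ => (1:ℝ)) := by
      funext x
      simp [Function.comp, Set.indicator_apply, hsZdef]
    have hint1 : Integrable ((fun z : ℝ => if z = 0 then (1:ℝ) else 0) ∘ Z) μ := by
      rw [hφ1Zeq]; exact (integrable_const 1).indicator hsZm
    have hint2 : Integrable ((fun x : 𝒢 => (1 - g x) * (if x ∈ A then (1:ℝ) else 0)) ∘ G) μ := by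
      refine Integrable.mono' (integrable_const 1) ((hφ2m.comp hG).aestronglyMeasurable) ?_
      filter_upwards with x
      simp only [Function.comp_apply]
      split_ifs with h
      · rw [mul_one]; exact hgbound x
      · rw [mul_zero]; simp
    have hmulInd := hindZG.integral_mul_eq_mul_integral hint1.1 hint2.1
    rw [show ((fun z : ℝ => if z = 0 then (1:ℝ) else 0) ∘ Z)
        * ((fun x : 𝒢 => (1 - g x) * (if x ∈ A then (1:ℝ) else 0)) ∘ G)
      = fun x => ((fun z : ℝ => if z = 0 then (1:ℝ) else 0) ∘ Z) x
          * ((fun x : 𝒢 => (1 - g x) * (if x ∈ A then (1:ℝ) else 0)) ∘ G) x from rfl] at hmulInd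
    have hprod_eq : ∫ x, ((fun z : ℝ => if z = 0 then (1:ℝ) else 0) ∘ Z) x
          * ((fun x : 𝒢 => (1 - g x) * (if x ∈ A then (1:ℝ) else 0)) ∘ G) x ∂μ
        = ∫ x in G ⁻¹' A ∩ sZ, (1 - g (G x)) ∂μ := by
      rw [← integral_indicator ((hG hA).inter hsZm)]
      congr 1
      funext x
      by_cases h1 : Z x = 0 <;> by_cases h2 : G x ∈ A <;>
        simp [Set.indicator_apply, Function.comp, h1, h2, hsZdef]
    have hphi1int : ∫ x, ((fun z : ℝ => if z = 0 then (1:ℝ) else 0) ∘ Z) x ∂μ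
        = (μ sZ).toReal := by
      rw [hφ1Zeq]
      exact integral_indicator_one hsZm
    have hphi2int : ∫ x, ((fun x : 𝒢 => (1 - g x) * (if x ∈ A then (1:ℝ) else 0)) ∘ G) x ∂μ
        = ∫ x in G ⁻¹' A, (1 - g (G x)) ∂μ := by
      rw [← integral_indicator (hG hA)]
      congr 1
      funext x
      by_cases h2 : G x ∈ A <;> simp [Set.indicator_apply, Function.comp, h2]
    rw [hprod_eq, hphi1int, hphi2int] at hmulInd
    rw [hres2, hmulInd, ← mul_assoc, ENNReal.toReal_inv, inv_mul_cancel₀ htoRne, one_mul]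
  -- main application
  refine (ae_eq_condExp_of_forall_setIntegral_eq hmGle hfint
    (fun s _ _ => hφint.integrableOn) (fun s hs _ => ?_) hφSM.aestronglyMeasurable).symm
  obtain ⟨A, hA, rfl⟩ := hs
  set B := C2 ∩ G ⁻¹' A with hBdef
  have hBm : MeasurableSet B := hC2m.inter (hG hA)
  -- independence of Y0' and the indicator of B
  have hψ : IndepFun Y0' (Set.indicator B fun _ => (1:ℝ)) μ := by
    rw [indepFun_iff_measure_inter_preimage_eq_mul]
    intro s' t hs' ht
    have hpre : (Set.indicator B fun _ => (1:ℝ)) ⁻¹' t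
        = if (1:ℝ) ∈ t then (if (0:ℝ) ∈ t then Set.univ else B)
          else (if (0:ℝ) ∈ t then Bᶜ else ∅) := by
      ext x
      by_cases hx : x ∈ B <;> by_cases h1 : (1:ℝ) ∈ t <;> by_cases h0 : (0:ℝ) ∈ t <;>
        simp [Set.indicator_apply, hx, h1, h0]
    rw [hpre]
    split_ifs with h1 h0 h0
    · simp
    · rw [hBdef]; exact hkey A hA s' hs'
    · have hk := hkey A hA s' hs'
      rw [← hBdef] at hk
      have hsplit : μ (Y0' ⁻¹' s' ∩ B) + μ (Y0' ⁻¹' s' \ B) = μ (Y0' ⁻¹' s') :=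
        measure_inter_add_diff _ hBm
      have hdiff : Y0' ⁻¹' s' ∩ Bᶜ = Y0' ⁻¹' s' \ B := (Set.diff_eq _ _).symm
      rw [hdiff]
      have h2 : μ (Y0' ⁻¹' s' \ B) = μ (Y0' ⁻¹' s') - μ (Y0' ⁻¹' s') * μ B := by
        rw [← hk]
        exact ENNReal.eq_sub_of_add_eq (measure_ne_top μ _) (by rw [add_comm]; exact hsplit)
      rw [h2, prob_compl_eq_one_sub hBm,
        ENNReal.mul_sub (fun _ _ => measure_ne_top μ _), mul_one]
    · simp
  -- compute the right-hand side set integral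
  have h1 : ∫ x in G ⁻¹' A, Y0 x * (if Z' x = 0 then (1:ℝ) else 0) ∂μ
      = ∫ x in G ⁻¹' A, Y0' x * (if Z' x = 0 then (1:ℝ) else 0) ∂μ :=
    setIntegral_congr_ae (hG hA) (by filter_upwards [heq] with x hx _; rw [hx])
  have h2 : ∫ x in G ⁻¹' A, Y0' x * (if Z' x = 0 then (1:ℝ) else 0) ∂μ
      = ∫ x, Y0' x * (Set.indicator B (fun _ => (1:ℝ)) x) ∂μ := by
    rw [← integral_indicator (hG hA)]
    congr 1
    funext x
    by_cases hx : G x ∈ A <;> by_cases hz : Z' x = 0 <;>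
      simp [Set.indicator_apply, hBdef, hC2def, hx, hz]
  have h3 := hψ.integral_mul_eq_mul_integral hY0'int.1 ((integrable_const 1).indicator hBm).1
  rw [show (Y0' * Set.indicator B fun _ => (1:ℝ))
      = fun x => Y0' x * Set.indicator B (fun _ => (1:ℝ)) x from rfl] at h3
  have h4 : ∫ x, Set.indicator B (fun _ => (1:ℝ)) x ∂μ = (μ B).toReal :=
    integral_indicator_one hBm
  have h5 : ∫ x, Y0' x ∂μ = ∫ ω', Y0 ω' ∂μ := integral_congr_ae heq.symm
  have hRHS : ∫ x in G ⁻¹' A, Y0 x * (if Z' x = 0 then (1:ℝ) else 0) ∂μ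
      = (∫ ω', Y0 ω' ∂μ) * (μ B).toReal := by
    rw [h1, h2, h3, h4, h5]
  have hμB : (μ B).toReal = (1 - π) * ∫ x in G ⁻¹' A, (1 - g (G x)) ∂μ := by
    have hB1 : μ B = μ sZ * ν B := by
      rw [← hcond]
      exact hnullZ' B Set.inter_subset_left
    rw [hB1, ENNReal.toReal_mul, hμsZ, ENNReal.toReal_ofReal (by linarith),
      ← htrans A hA, hBdef, hK4 A hA]
  have hLHS : ∫ x in G ⁻¹' A, (∫ ω', Y0 ω' ∂μ) * (1 - (π + g (G x) * (1 - π))) ∂μ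
      = (∫ ω', Y0 ω' ∂μ) * ((1 - π) * ∫ x in G ⁻¹' A, (1 - g (G x)) ∂μ) := by
    have hpt : ∀ x : Ω, (∫ ω', Y0 ω' ∂μ) * (1 - (π + g (G x) * (1 - π)))
        = ((∫ ω', Y0 ω' ∂μ) * (1 - π)) * (1 - g (G x)) := by intro x; ring
    rw [setIntegral_congr_ae (hG hA) (Filter.Eventually.of_forall fun x _ => hpt x),
      integral_const_mul, mul_assoc]
  rw [hLHS, hRHS, hμB]
end

section
/- Single-unit unbiasedness of the post-diffusion Horvitz–Thompson weighting in the cluster randomized setting: under assumptions (a)–(e), E[Y · Z' / π'(G)] = E[Y1] and E[Y · (1 − Z') / (1 − π'(G))] = E[Y0]; consequently E[ Y·Z'/π'(G) − Y·(1 − Z')/(1 − π'(G)) ] = E[Y1] − E[Y0]. -/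
open MeasureTheory ProbabilityTheory

lemma condIndepFun_congr_left' {Ω β γ : Type*} {m' : MeasurableSpace Ω}
    {mΩ : MeasurableSpace Ω} [StandardBorelSpace Ω]
    {mβ : MeasurableSpace β} {mγ : MeasurableSpace γ}
    (hm' : m' ≤ mΩ) {ν : Measure Ω} [IsFiniteMeasure ν]
    {f f' : Ω → β} {g : Ω → γ}
    (h : CondIndepFun m' hm' f g ν) (hff' : f =ᵐ[ν] f') :
    CondIndepFun m' hm' f' g ν := by
  refine Kernel.IndepFun.congr' h ?_ (Filter.Eventually.of_forall fun a => Filter.EventuallyEq.rfl)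
  obtain ⟨N, hNsub, hNmeas, hNnull⟩ :=
    exists_measurable_superset_of_null (ae_iff.mp hff')
  have hind : N.indicator (fun _ => (1:ℝ)) =ᵐ[ν] 0 := by
    have hmem : ∀ᵐ x ∂ν, x ∉ N := by
      rw [ae_iff]
      simpa using hNnull
    filter_upwards [hmem] with x hx
    simp [Set.indicator_of_notMem hx]
  have h1 : (fun ω => (condExpKernel ν m' ω N).toReal) =ᵐ[ν] (0 : Ω → ℝ) := by
    refine (condExpKernel_ae_eq_condExp hm' hNmeas).trans ?_
    calc ν[N.indicator (fun _ => (1:ℝ)) | m'] =ᵐ[ν] ν[(0 : Ω → ℝ) | m'] :=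
          condExp_congr_ae hind
      _ = 0 := condExp_zero
  have h1m : StronglyMeasurable[m'] (fun ω => (condExpKernel ν m' ω N).toReal) :=
    (Measurable.ennreal_toReal (measurable_condExpKernel hNmeas)).stronglyMeasurable
  have h2 : (fun ω => (condExpKernel ν m' ω N).toReal) =ᵐ[ν.trim hm'] (0 : Ω → ℝ) :=
    (StronglyMeasurable.ae_eq_trim_iff hm' h1m stronglyMeasurable_const).mpr h1
  filter_upwards [h2] with a ha
  have haN : condExpKernel ν m' a N = 0 := by
    have hne : condExpKernel ν m' a N ≠ ⊤ := measure_ne_top _ _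
    have h0 : (condExpKernel ν m' a N).toReal = 0 := ha
    simpa [ENNReal.toReal_eq_zero_iff, hne] using h0
  rw [Filter.EventuallyEq, ae_iff]
  exact measure_mono_null hNsub haN

lemma indepFun_join_of_condIndepFun {Ω 𝒲 𝒢 : Type*} (m' : MeasurableSpace Ω)
    {mΩ : MeasurableSpace Ω} [StandardBorelSpace Ω]
    {m𝒲 : MeasurableSpace 𝒲} {m𝒢 : MeasurableSpace 𝒢}
    {ν : Measure Ω} [IsProbabilityMeasure ν]
    {W : Ω → 𝒲} {G : Ω → 𝒢} (hW : Measurable W) (hG : Measurable G)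
    {X Z' : Ω → ℝ} (hX : Measurable X) (hZ' : Measurable Z')
    (hm' : m' ≤ mΩ)
    (hm'eq : m' = MeasurableSpace.comap (fun ω => (W ω, G ω)) inferInstance)
    (h_indep : IndepFun X (fun ω => (W ω, G ω)) ν)
    (h_cond : CondIndepFun m' hm' X Z' ν) :
    IndepFun X (fun ω => (Z' ω, W ω, G ω)) ν := by
  have hWG : Measurable (fun ω => (W ω, G ω)) := hW.prodMk hG
  have hΦ : Measurable (fun ω => (Z' ω, W ω, G ω)) := hZ'.prodMk hWG
  haveI : SigmaFinite (ν.trim hm') := by infer_instance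
  -- condexp of B := X ⁻¹' S given m' is constant
  have h_condexp_B : ∀ S : Set ℝ, MeasurableSet S →
      (ν⟦X ⁻¹' S | m'⟧) =ᵐ[ν] fun _ => (ν (X ⁻¹' S)).toReal := by
    intro S hS
    have hBm : MeasurableSet[MeasurableSpace.comap X inferInstance] (X ⁻¹' S) := ⟨S, hS, rfl⟩
    have hBsm : StronglyMeasurable[MeasurableSpace.comap X inferInstance]
        ((X ⁻¹' S).indicator (fun _ => (1:ℝ))) := stronglyMeasurable_const.indicator hBm
    have hIndep : Indep (MeasurableSpace.comap X inferInstance) m' ν := by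
      rw [hm'eq]
      exact (IndepFun_iff_Indep _ _ _).mp h_indep
    refine (condExp_indep_eq hX.comap_le hm' hBsm hIndep).trans ?_
    have hInt : ∫ ω, (X ⁻¹' S).indicator (fun _ => (1:ℝ)) ω ∂ν = (ν (X ⁻¹' S)).toReal := by
      rw [integral_indicator_const _ (hX hS), smul_eq_mul, mul_one, measureReal_def]
    rw [hInt]
  -- main measure identity
  have key : ∀ (S T : Set ℝ) (U : Set (𝒲 × 𝒢)), MeasurableSet S → MeasurableSet T →
      MeasurableSet U →
      ν (X ⁻¹' S ∩ (Z' ⁻¹' T ∩ (fun ω => (W ω, G ω)) ⁻¹' U))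
        = ν (X ⁻¹' S) * ν (Z' ⁻¹' T ∩ (fun ω => (W ω, G ω)) ⁻¹' U) := by
    intro S T U hS hT hU
    have hB : MeasurableSet (X ⁻¹' S) := hX hS
    have hC : MeasurableSet (Z' ⁻¹' T) := hZ' hT
    have hD : MeasurableSet ((fun ω => (W ω, G ω)) ⁻¹' U) := hWG hU
    have hDm' : MeasurableSet[m'] ((fun ω => (W ω, G ω)) ⁻¹' U) := by
      rw [hm'eq]; exact ⟨U, hU, rfl⟩
    have h_prod : (ν⟦X ⁻¹' S ∩ Z' ⁻¹' T | m'⟧)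
        =ᵐ[ν] fun ω => (ν⟦X ⁻¹' S | m'⟧) ω * (ν⟦Z' ⁻¹' T | m'⟧) ω :=
      (condIndepFun_iff_condExp_inter_preimage_eq_mul hX hZ').mp h_cond S T hS hT
    have hBCint : Integrable ((X ⁻¹' S ∩ Z' ⁻¹' T).indicator (fun _ => (1:ℝ))) ν :=
      (integrable_const (1:ℝ)).indicator (hB.inter hC)
    have hCint : Integrable ((Z' ⁻¹' T).indicator (fun _ => (1:ℝ))) ν :=
      (integrable_const (1:ℝ)).indicator hC
    set D := (fun ω => (W ω, G ω)) ⁻¹' U with hDdef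
    have e1 : ∫ ω in D, (X ⁻¹' S ∩ Z' ⁻¹' T).indicator (fun _ => (1:ℝ)) ω ∂ν
        = (ν ((X ⁻¹' S ∩ Z' ⁻¹' T) ∩ D)).toReal := by
      rw [setIntegral_indicator (hB.inter hC), setIntegral_const, smul_eq_mul, mul_one,
        Set.inter_comm, measureReal_def]
    have e5 : ∫ ω in D, (Z' ⁻¹' T).indicator (fun _ => (1:ℝ)) ω ∂ν
        = (ν (Z' ⁻¹' T ∩ D)).toReal := by
      rw [setIntegral_indicator hC, setIntegral_const, smul_eq_mul, mul_one, Set.inter_comm, measureReal_def]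
    have e2 : ∫ ω in D, (X ⁻¹' S ∩ Z' ⁻¹' T).indicator (fun _ => (1:ℝ)) ω ∂ν
        = ∫ ω in D, (ν⟦X ⁻¹' S ∩ Z' ⁻¹' T | m'⟧) ω ∂ν :=
      (setIntegral_condExp hm' hBCint hDm').symm
    have e3 : ∫ ω in D, (ν⟦X ⁻¹' S ∩ Z' ⁻¹' T | m'⟧) ω ∂ν
        = ∫ ω in D, ((ν (X ⁻¹' S)).toReal * (ν⟦Z' ⁻¹' T | m'⟧) ω) ∂ν := by
      refine setIntegral_congr_ae (hm' D hDm') ?_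
      filter_upwards [h_prod, h_condexp_B S hS] with ω h1 h2 _
      rw [h1, h2]
    have e4 : ∫ ω in D, ((ν (X ⁻¹' S)).toReal * (ν⟦Z' ⁻¹' T | m'⟧) ω) ∂ν
        = (ν (X ⁻¹' S)).toReal * ∫ ω in D, (ν⟦Z' ⁻¹' T | m'⟧) ω ∂ν := integral_const_mul _ _
    have e6 : ∫ ω in D, (ν⟦Z' ⁻¹' T | m'⟧) ω ∂ν = (ν (Z' ⁻¹' T ∩ D)).toReal :=
      (setIntegral_condExp hm' hCint hDm').trans e5
    have keyR : (ν ((X ⁻¹' S ∩ Z' ⁻¹' T) ∩ D)).toReal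
        = ((ν (X ⁻¹' S)) * (ν (Z' ⁻¹' T ∩ D))).toReal := by
      rw [ENNReal.toReal_mul, ← e1, e2, e3, e4, e6]
    have h := (ENNReal.toReal_eq_toReal_iff' (measure_ne_top _ _)
      (ENNReal.mul_ne_top (measure_ne_top _ _) (measure_ne_top _ _))).mp keyR
    rwa [Set.inter_assoc] at h
  -- build independence via π-systems
  rw [IndepFun_iff_Indep]
  have hgen1 : MeasurableSpace.comap X inferInstance
      = MeasurableSpace.generateFrom (Set.preimage X '' {S : Set ℝ | MeasurableSet S}) := by
    conv_lhs => rw [← MeasurableSpace.generateFrom_measurableSet (α := ℝ)]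
    exact MeasurableSpace.comap_generateFrom
  have hgen2 : MeasurableSpace.comap (fun ω => (Z' ω, W ω, G ω)) inferInstance
      = MeasurableSpace.generateFrom (Set.preimage (fun ω => (Z' ω, W ω, G ω)) ''
          (Set.image2 (· ×ˢ ·) {T : Set ℝ | MeasurableSet T}
            {U : Set (𝒲 × 𝒢) | MeasurableSet U})) := by
    conv_lhs => rw [← generateFrom_prod]
    exact MeasurableSpace.comap_generateFrom
  refine IndepSets.indep hX.comap_le hΦ.comap_le
    ((@MeasurableSpace.isPiSystem_measurableSet ℝ _).comap X)
    (isPiSystem_prod.comap (fun ω => (Z' ω, W ω, G ω))) hgen1 hgen2 ?_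
  rintro _ _ ⟨S, hS, rfl⟩ ⟨R, hR, rfl⟩
  obtain ⟨T, hT, U, hU, rfl⟩ := hR
  have hpre : (fun ω => (Z' ω, W ω, G ω)) ⁻¹' (T ×ˢ U)
      = Z' ⁻¹' T ∩ (fun ω => (W ω, G ω)) ⁻¹' U := by
    ext ω; simp [Set.mem_prod]
  refine Filter.Eventually.of_forall fun a => ?_
  simpa [hpre] using key S T U hS hT hU

lemma integral_mul_Z'_eq_integral_mul_g {Ω 𝒲 𝒢 : Type*}
    (m' mG : MeasurableSpace Ω)
    {mΩ : MeasurableSpace Ω}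
    {m𝒲 : MeasurableSpace 𝒲} {m𝒢 : MeasurableSpace 𝒢}
    {ν : Measure Ω} [IsProbabilityMeasure ν]
    {W : Ω → 𝒲} {G : Ω → 𝒢} (hW : Measurable W) (hG : Measurable G)
    {Z' : Ω → ℝ} (hZ' : Measurable Z') (hZ'01 : ∀ ω, Z' ω = 0 ∨ Z' ω = 1)
    {ρ : 𝒲 × 𝒢 → ℝ} (hρmeas : Measurable ρ) (hρ01 : ∀ x, 0 ≤ ρ x ∧ ρ x < 1)
    {g : 𝒢 → ℝ} (hgmeas : Measurable g)
    (hm' : m' ≤ mΩ) (hm'eq : m' = MeasurableSpace.comap (fun ω => (W ω, G ω)) inferInstance)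
    (hmG : mG ≤ mΩ) (hmGeq : mG = MeasurableSpace.comap G inferInstance)
    (hdρ : ν[Z' | m'] =ᵐ[ν] fun ω => ρ (W ω, G ω))
    (he : ν[fun ω => ρ (W ω, G ω) | mG] =ᵐ[ν] fun ω => g (G ω))
    (h : 𝒢 → ℝ) (hh : Measurable h) (C : ℝ) (hC : ∀ x, |h x| ≤ C) :
    ∫ ω, h (G ω) * Z' ω ∂ν = ∫ ω, h (G ω) * g (G ω) ∂ν := by
  haveI : SigmaFinite (ν.trim hm') := by infer_instance
  haveI : SigmaFinite (ν.trim hmG) := by infer_instance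
  have hbdd : ∀ (f : Ω → ℝ), Measurable f → ∀ (c : ℝ), (∀ ω, |f ω| ≤ c) → Integrable f ν := by
    intro f hf c hc
    refine (integrable_const c).mono' hf.aestronglyMeasurable ?_
    exact Filter.Eventually.of_forall fun ω => by simpa [Real.norm_eq_abs] using hc ω
  have hZ'b : ∀ ω, |Z' ω| ≤ 1 := by
    intro ω; rcases hZ'01 ω with hzz | hzz <;> simp [hzz]
  have hρb : ∀ ω, |ρ (W ω, G ω)| ≤ 1 := by
    intro ω
    have h1 := (hρ01 (W ω, G ω)).1
    have h2 := (hρ01 (W ω, G ω)).2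
    rw [abs_of_nonneg h1]; linarith
  have hhGmeas : Measurable fun ω => h (G ω) := hh.comp hG
  have hkm' : StronglyMeasurable[m'] (fun ω => h (G ω)) := by
    have hpair : Measurable[m'] (fun ω => (W ω, G ω)) :=
      measurable_iff_comap_le.mpr (le_of_eq hm'eq.symm)
    exact ((hh.comp measurable_snd).comp hpair).stronglyMeasurable
  have hkmG : StronglyMeasurable[mG] (fun ω => h (G ω)) := by
    have hGmG : Measurable[mG] G := measurable_iff_comap_le.mpr (le_of_eq hmGeq.symm)
    exact (hh.comp hGmG).stronglyMeasurable
  have hCnn : ∀ ω : Ω, (0:ℝ) ≤ C := fun ω => (abs_nonneg _).trans (hC (G ω))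
  have hZ'int : Integrable Z' ν := hbdd Z' hZ' 1 hZ'b
  have hhZ'int : Integrable (fun ω => h (G ω) * Z' ω) ν := by
    refine hbdd _ (hhGmeas.mul hZ') C fun ω => ?_
    calc |h (G ω) * Z' ω| = |h (G ω)| * |Z' ω| := abs_mul _ _
      _ ≤ C * 1 := mul_le_mul (hC _) (hZ'b ω) (abs_nonneg _) (hCnn ω)
      _ = C := mul_one C
  have hρint : Integrable (fun ω => ρ (W ω, G ω)) ν :=
    hbdd _ (hρmeas.comp (hW.prodMk hG)) 1 hρb
  have hhρint : Integrable (fun ω => h (G ω) * ρ (W ω, G ω)) ν := by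
    refine hbdd _ (hhGmeas.mul (hρmeas.comp (hW.prodMk hG))) C fun ω => ?_
    calc |h (G ω) * ρ (W ω, G ω)| = |h (G ω)| * |ρ (W ω, G ω)| := abs_mul _ _
      _ ≤ C * 1 := mul_le_mul (hC _) (hρb ω) (abs_nonneg _) (hCnn ω)
      _ = C := mul_one C
  have step1 : ∫ ω, h (G ω) * Z' ω ∂ν = ∫ ω, h (G ω) * ρ (W ω, G ω) ∂ν := by
    have hmul : ν[(fun ω => h (G ω)) * Z' | m'] =ᵐ[ν] (fun ω => h (G ω)) * ν[Z' | m'] :=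
      condExp_mul_of_stronglyMeasurable_left hkm' hhZ'int hZ'int
    calc ∫ ω, h (G ω) * Z' ω ∂ν = ∫ ω, (ν[(fun ω => h (G ω)) * Z' | m']) ω ∂ν :=
          (integral_condExp hm').symm
      _ = ∫ ω, h (G ω) * ρ (W ω, G ω) ∂ν := by
          refine integral_congr_ae ?_
          filter_upwards [hmul, hdρ] with ω h1 h2
          rw [h1]
          simp only [Pi.mul_apply]
          rw [h2]
  have step2 : ∫ ω, h (G ω) * ρ (W ω, G ω) ∂ν = ∫ ω, h (G ω) * g (G ω) ∂ν := by
    have hmul : ν[(fun ω => h (G ω)) * (fun ω => ρ (W ω, G ω)) | mG]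
        =ᵐ[ν] (fun ω => h (G ω)) * ν[fun ω => ρ (W ω, G ω) | mG] :=
      condExp_mul_of_stronglyMeasurable_left hkmG hhρint hρint
    calc ∫ ω, h (G ω) * ρ (W ω, G ω) ∂ν
        = ∫ ω, (ν[(fun ω => h (G ω)) * (fun ω => ρ (W ω, G ω)) | mG]) ω ∂ν :=
          (integral_condExp hmG).symm
      _ = ∫ ω, h (G ω) * g (G ω) ∂ν := by
          refine integral_congr_ae ?_
          filter_upwards [hmul, he] with ω h1 h2
          rw [h1]
          simp only [Pi.mul_apply]
          rw [h2]
  rw [step1, step2]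

/-- Single-unit unbiasedness of the post-diffusion Horvitz–Thompson weighting in the cluster
randomized setting: E[Y·Z'/π'(G)] = E[Y1], E[Y·(1 − Z')/(1 − π'(G))] = E[Y0], and hence
E[Y·Z'/π'(G) − Y·(1 − Z')/(1 − π'(G))] = E[Y1] − E[Y0]. -/
theorem horvitz_thompson_single_unit_cluster
    {Ω : Type*} [MeasurableSpace Ω] [StandardBorelSpace Ω] [Nonempty Ω]
    (μ : Measure Ω) [IsProbabilityMeasure μ]
    {𝒲 : Type*} [MeasurableSpace 𝒲] [StandardBorelSpace 𝒲]
    {𝒢 : Type*} [MeasurableSpace 𝒢] [StandardBorelSpace 𝒢]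
    (W : Ω → 𝒲) (hW : Measurable W) (G : Ω → 𝒢) (hG : Measurable G)
    (Z Z' : Ω → ℝ) (hZ : Measurable Z) (hZ' : Measurable Z')
    (hZ01 : ∀ ω, Z ω = 0 ∨ Z ω = 1) (hZ'01 : ∀ ω, Z' ω = 0 ∨ Z' ω = 1)
    (Y0 Y1 Y : Ω → ℝ) (hY0 : Integrable Y0 μ) (hY1 : Integrable Y1 μ)
    (hYdef : ∀ ω, Y ω = Z' ω * Y1 ω + (1 - Z' ω) * Y0 ω)
    (π : ℝ) (hπ0 : 0 < π) (hπ1 : π < 1)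
    (ρ : 𝒲 × 𝒢 → ℝ) (hρmeas : Measurable ρ) (hρ01 : ∀ x, 0 ≤ ρ x ∧ ρ x < 1)
    (g : 𝒢 → ℝ) (hgmeas : Measurable g) (hg01 : ∀ x, 0 ≤ g x ∧ g x < 1)
    (ha : IndepFun Z G μ) (haπ : μ {ω | Z ω = 1} = ENNReal.ofReal π)
    (hb : ∀ᵐ ω ∂μ, Z ω = 1 → Z' ω = 1)
    (hc1 : IndepFun Y1 (fun ω => (Z ω, W ω, G ω)) μ)
    (hc0 : IndepFun Y0 (fun ω => (Z ω, W ω, G ω)) μ)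
    (hd0 : CondIndepFun (MeasurableSpace.comap (fun ω => (W ω, G ω)) inferInstance)
      (hW.prodMk hG).comap_le Y0 Z' (μ[|{ω | Z ω = 0}]))
    (hd1 : CondIndepFun (MeasurableSpace.comap (fun ω => (W ω, G ω)) inferInstance)
      (hW.prodMk hG).comap_le Y1 Z' (μ[|{ω | Z ω = 0}]))
    (hdρ : (μ[|{ω | Z ω = 0}])[fun ω => if Z' ω = 1 then (1:ℝ) else 0 |
        MeasurableSpace.comap (fun ω => (W ω, G ω)) inferInstance]
      =ᵐ[μ[|{ω | Z ω = 0}]] fun ω => ρ (W ω, G ω))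
    (he : (μ[|{ω | Z ω = 0}])[fun ω => ρ (W ω, G ω) | MeasurableSpace.comap G inferInstance]
      =ᵐ[μ[|{ω | Z ω = 0}]] fun ω => g (G ω)) :
    (∫ ω, Y ω * Z' ω / (π + g (G ω) * (1 - π)) ∂μ = ∫ ω, Y1 ω ∂μ)
    ∧ (∫ ω, Y ω * (1 - Z' ω) / (1 - (π + g (G ω) * (1 - π))) ∂μ = ∫ ω, Y0 ω ∂μ)
    ∧ (∫ ω, (Y ω * Z' ω / (π + g (G ω) * (1 - π))
          - Y ω * (1 - Z' ω) / (1 - (π + g (G ω) * (1 - π)))) ∂μ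
        = ∫ ω, Y1 ω ∂μ - ∫ ω, Y0 ω ∂μ) := by
  ------------------------------------------------------------------
  -- basic sets and measures
  ------------------------------------------------------------------
  have h1π : (0:ℝ) < 1 - π := by linarith
  have hms : MeasurableSet {ω | Z ω = 0} := hZ (measurableSet_singleton 0)
  have hmt : MeasurableSet {ω | Z ω = 1} := hZ (measurableSet_singleton 1)
  have hst : {ω | Z ω = 0} = {ω | Z ω = 1}ᶜ := by
    ext ω; rcases hZ01 ω with h | h <;> simp [h]
  have hμs : μ {ω | Z ω = 0} = ENNReal.ofReal (1 - π) := by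
    rw [hst, prob_compl_eq_one_sub hmt, haπ, ← ENNReal.ofReal_one,
      ← ENNReal.ofReal_sub _ hπ0.le]
  have hμs0 : μ {ω | Z ω = 0} ≠ 0 := by
    rw [hμs]; exact (ENNReal.ofReal_pos.mpr h1π).ne'
  have hμsR : (μ {ω | Z ω = 0}).toReal = 1 - π := by
    rw [hμs]; exact ENNReal.toReal_ofReal h1π.le
  have hμtR : (μ {ω | Z ω = 1}).toReal = π := by
    rw [haπ]; exact ENNReal.toReal_ofReal hπ0.le
  haveI hνprob : IsProbabilityMeasure (μ[|{ω | Z ω = 0}]) :=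
    cond_isProbabilityMeasure hμs0
  have hνdef : μ[|{ω | Z ω = 0}]
      = (μ {ω | Z ω = 0})⁻¹ • μ.restrict {ω | Z ω = 0} := rfl
  have hrestrict_eq : μ.restrict {ω | Z ω = 0} = (μ {ω | Z ω = 0}) • (μ[|{ω | Z ω = 0}]) := by
    rw [hνdef, smul_smul, ENNReal.mul_inv_cancel hμs0 (measure_ne_top _ _), one_smul]
  have hν_int : ∀ {f : Ω → ℝ}, Integrable f μ → Integrable f (μ[|{ω | Z ω = 0}]) := by
    intro f hf
    rw [hνdef]
    exact (hf.restrict).smul_measure (ENNReal.inv_ne_top.mpr hμs0)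
  have hint_sν : ∀ f : Ω → ℝ,
      ∫ ω in {ω | Z ω = 0}, f ω ∂μ = (1 - π) * ∫ ω, f ω ∂(μ[|{ω | Z ω = 0}]) := by
    intro f
    calc ∫ ω in {ω | Z ω = 0}, f ω ∂μ
        = ∫ ω, f ω ∂((μ {ω | Z ω = 0}) • (μ[|{ω | Z ω = 0}])) := by rw [← hrestrict_eq]
      _ = (μ {ω | Z ω = 0}).toReal • ∫ ω, f ω ∂(μ[|{ω | Z ω = 0}]) := integral_smul_measure _ _
      _ = (1 - π) * ∫ ω, f ω ∂(μ[|{ω | Z ω = 0}]) := by rw [hμsR, smul_eq_mul]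
  have hν_ac : (μ[|{ω | Z ω = 0}]) ≪ μ := cond_absolutelyContinuous
  ------------------------------------------------------------------
  -- measurable versions of Y0 and Y1
  ------------------------------------------------------------------
  obtain ⟨X1, hX1sm, hX1ae⟩ : ∃ X1 : Ω → ℝ, StronglyMeasurable X1 ∧ Y1 =ᵐ[μ] X1 :=
    ⟨hY1.1.mk Y1, hY1.1.stronglyMeasurable_mk, hY1.1.ae_eq_mk⟩
  obtain ⟨X0, hX0sm, hX0ae⟩ : ∃ X0 : Ω → ℝ, StronglyMeasurable X0 ∧ Y0 =ᵐ[μ] X0 :=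
    ⟨hY0.1.mk Y0, hY0.1.stronglyMeasurable_mk, hY0.1.ae_eq_mk⟩
  have hX1m : Measurable X1 := hX1sm.measurable
  have hX0m : Measurable X0 := hX0sm.measurable
  have hX1int : Integrable X1 μ := hY1.congr hX1ae
  have hX0int : Integrable X0 μ := hY0.congr hX0ae
  have hX1ae_ν : Y1 =ᵐ[μ[|{ω | Z ω = 0}]] X1 := hν_ac.ae_eq hX1ae
  have hX0ae_ν : Y0 =ᵐ[μ[|{ω | Z ω = 0}]] X0 := hν_ac.ae_eq hX0ae
  have hc1' : IndepFun X1 (fun ω => (Z ω, W ω, G ω)) μ :=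
    hc1.congr hX1ae Filter.EventuallyEq.rfl
  have hc0' : IndepFun X0 (fun ω => (Z ω, W ω, G ω)) μ :=
    hc0.congr hX0ae Filter.EventuallyEq.rfl
  ------------------------------------------------------------------
  -- indicator function manipulations
  ------------------------------------------------------------------
  have hind0 : Measurable (fun z : ℝ => if z = 0 then (1:ℝ) else 0) :=
    Measurable.ite (measurableSet_singleton 0) measurable_const measurable_const
  have hind1 : Measurable (fun z : ℝ => if z = 1 then (1:ℝ) else 0) :=
    Measurable.ite (measurableSet_singleton 1) measurable_const measurable_const
  have hs_ind : ∀ f : Ω → ℝ,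
      ∫ ω in {ω | Z ω = 0}, f ω ∂μ = ∫ ω, (if Z ω = 0 then (1:ℝ) else 0) * f ω ∂μ := by
    intro f
    rw [← integral_indicator hms]
    refine integral_congr_ae (Filter.Eventually.of_forall fun ω => ?_)
    by_cases hz : Z ω = 0
    · simp [Set.indicator_of_mem, Set.mem_setOf_eq, hz]
    · simp [Set.indicator_of_notMem, Set.mem_setOf_eq, hz]
  have ht_ind : ∀ f : Ω → ℝ,
      ∫ ω in {ω | Z ω = 1}, f ω ∂μ = ∫ ω, (if Z ω = 1 then (1:ℝ) else 0) * f ω ∂μ := by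
    intro f
    rw [← integral_indicator hmt]
    refine integral_congr_ae (Filter.Eventually.of_forall fun ω => ?_)
    by_cases hz : Z ω = 1
    · simp [Set.indicator_of_mem, Set.mem_setOf_eq, hz]
    · simp [Set.indicator_of_notMem, Set.mem_setOf_eq, hz]
  have hint_ind0 : ∫ ω, (if Z ω = 0 then (1:ℝ) else 0) ∂μ = 1 - π := by
    have h : (fun ω => if Z ω = 0 then (1:ℝ) else 0)
        = Set.indicator {ω | Z ω = 0} (fun _ => (1:ℝ)) := by
      funext ω; by_cases hz : Z ω = 0 <;> simp [Set.indicator, Set.mem_setOf_eq, hz]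
    rw [h, integral_indicator_const _ hms, smul_eq_mul, mul_one, measureReal_def, hμsR]
  have hint_ind1 : ∫ ω, (if Z ω = 1 then (1:ℝ) else 0) ∂μ = π := by
    have h : (fun ω => if Z ω = 1 then (1:ℝ) else 0)
        = Set.indicator {ω | Z ω = 1} (fun _ => (1:ℝ)) := by
      funext ω; by_cases hz : Z ω = 1 <;> simp [Set.indicator, Set.mem_setOf_eq, hz]
    rw [h, integral_indicator_const _ hmt, smul_eq_mul, mul_one, measureReal_def, hμtR]
  have hZ'if : (fun ω => if Z' ω = 1 then (1:ℝ) else 0) = Z' := by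
    funext ω; rcases hZ'01 ω with h | h <;> simp [h]
  have hdρ' : (μ[|{ω | Z ω = 0}])[Z' |
      MeasurableSpace.comap (fun ω => (W ω, G ω)) inferInstance]
      =ᵐ[μ[|{ω | Z ω = 0}]] fun ω => ρ (W ω, G ω) := by
    rw [← hZ'if]; exact hdρ
  ------------------------------------------------------------------
  -- bounded-measurable integrability helper (for the cond measure)
  ------------------------------------------------------------------
  have hbddν : ∀ (f : Ω → ℝ), Measurable f → ∀ (c : ℝ), (∀ ω, |f ω| ≤ c)
      → Integrable f (μ[|{ω | Z ω = 0}]) := by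
    intro f hf c hc
    refine (integrable_const c).mono' hf.aestronglyMeasurable ?_
    exact Filter.Eventually.of_forall fun ω => by simpa [Real.norm_eq_abs] using hc ω
  have hbddμ : ∀ (f : Ω → ℝ), Measurable f → ∀ (c : ℝ), (∀ ω, |f ω| ≤ c)
      → Integrable f μ := by
    intro f hf c hc
    refine (integrable_const c).mono' hf.aestronglyMeasurable ?_
    exact Filter.Eventually.of_forall fun ω => by simpa [Real.norm_eq_abs] using hc ω
  ------------------------------------------------------------------
  -- independence of X and (W, G) under the conditional measure
  ------------------------------------------------------------------
  have hWGind : ∀ (X : Ω → ℝ), Measurable X → IndepFun X (fun ω => (Z ω, W ω, G ω)) μ →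
      IndepFun X (fun ω => (W ω, G ω)) (μ[|{ω | Z ω = 0}]) := by
    intro X hXm hXind
    rw [indepFun_iff_measure_inter_preimage_eq_mul]
    intro S U hS hU
    have hXZ := indepFun_iff_measure_inter_preimage_eq_mul.mp hXind
    have hps : {ω | Z ω = 0} ∩ (fun ω => (W ω, G ω)) ⁻¹' U
        = (fun ω => (Z ω, W ω, G ω)) ⁻¹' (({0} : Set ℝ) ×ˢ U) := by
      ext ω; simp [Set.mem_prod, Set.mem_setOf_eq, eq_comm, and_comm]
    have hs_eq : {ω | Z ω = 0}
        = (fun ω => (Z ω, W ω, G ω)) ⁻¹' (({0} : Set ℝ) ×ˢ (Set.univ : Set (𝒲 × 𝒢))) := by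
      ext ω; simp [Set.mem_prod, Set.mem_setOf_eq, eq_comm, and_comm]
    have h1 : (μ[|{ω | Z ω = 0}]) (X ⁻¹' S ∩ (fun ω => (W ω, G ω)) ⁻¹' U)
        = (μ {ω | Z ω = 0})⁻¹ * (μ (X ⁻¹' S)
            * μ ((fun ω => (Z ω, W ω, G ω)) ⁻¹' (({0} : Set ℝ) ×ˢ U))) := by
      have hsets : {ω | Z ω = 0} ∩ (X ⁻¹' S ∩ (fun ω => (W ω, G ω)) ⁻¹' U)
          = X ⁻¹' S ∩ ((fun ω => (Z ω, W ω, G ω)) ⁻¹' (({0} : Set ℝ) ×ˢ U)) := by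
        ext ω; simp only [Set.mem_inter_iff, Set.mem_preimage, Set.mem_setOf_eq,
          Set.mem_prod, Set.mem_singleton_iff, eq_comm]
        tauto
      rw [cond_apply hms, hsets, hXZ S _ hS ((measurableSet_singleton 0).prod hU)]
    have h2 : (μ[|{ω | Z ω = 0}]) (X ⁻¹' S) = μ (X ⁻¹' S) := by
      rw [cond_apply hms, Set.inter_comm, hs_eq,
        hXZ S _ hS ((measurableSet_singleton 0).prod MeasurableSet.univ), ← hs_eq]
      rw [mul_comm (μ (X ⁻¹' S)) _, ← mul_assoc,
        ENNReal.inv_mul_cancel hμs0 (measure_ne_top _ _), one_mul]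
    have h3 : (μ[|{ω | Z ω = 0}]) ((fun ω => (W ω, G ω)) ⁻¹' U)
        = (μ {ω | Z ω = 0})⁻¹ * μ ((fun ω => (Z ω, W ω, G ω)) ⁻¹' (({0} : Set ℝ) ×ˢ U)) := by
      rw [cond_apply hms, hps]
    rw [h1, h2, h3]
    ring
  have hX1ν_int : Integrable X1 (μ[|{ω | Z ω = 0}]) := hν_int hX1int
  have hX0ν_int : Integrable X0 (μ[|{ω | Z ω = 0}]) := hν_int hX0int
  ------------------------------------------------------------------
  -- joint independence of X and (Z', W, G) under the conditional measure
  ------------------------------------------------------------------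
  have hd1' : CondIndepFun (MeasurableSpace.comap (fun ω => (W ω, G ω)) inferInstance)
      (hW.prodMk hG).comap_le X1 Z' (μ[|{ω | Z ω = 0}]) :=
    condIndepFun_congr_left' (hW.prodMk hG).comap_le hd1 hX1ae_ν
  have hd0' : CondIndepFun (MeasurableSpace.comap (fun ω => (W ω, G ω)) inferInstance)
      (hW.prodMk hG).comap_le X0 Z' (μ[|{ω | Z ω = 0}]) :=
    condIndepFun_congr_left' (hW.prodMk hG).comap_le hd0 hX0ae_ν
  have hcore1 : IndepFun X1 (fun ω => (Z' ω, W ω, G ω)) (μ[|{ω | Z ω = 0}]) :=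
    indepFun_join_of_condIndepFun _ hW hG hX1m hZ' (hW.prodMk hG).comap_le rfl
      (hWGind X1 hX1m hc1') hd1'
  have hcore0 : IndepFun X0 (fun ω => (Z' ω, W ω, G ω)) (μ[|{ω | Z ω = 0}]) :=
    indepFun_join_of_condIndepFun _ hW hG hX0m hZ' (hW.prodMk hG).comap_le rfl
      (hWGind X0 hX0m hc0') hd0'
  ------------------------------------------------------------------
  -- tower rule (Z' may be replaced by g (G ·) inside ν-integrals)
  ------------------------------------------------------------------
  have tower : ∀ (h : 𝒢 → ℝ), Measurable h → ∀ (c : ℝ), (∀ x, |h x| ≤ c) →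
      ∫ ω, h (G ω) * Z' ω ∂(μ[|{ω | Z ω = 0}])
        = ∫ ω, h (G ω) * g (G ω) ∂(μ[|{ω | Z ω = 0}]) := by
    intro h hh c hc
    exact integral_mul_Z'_eq_integral_mul_g
      (MeasurableSpace.comap (fun ω => (W ω, G ω)) inferInstance)
      (MeasurableSpace.comap G inferInstance)
      hW hG hZ' hZ'01 hρmeas hρ01 hgmeas
      (hW.prodMk hG).comap_le rfl hG.comap_le rfl hdρ' he h hh c hc
  ------------------------------------------------------------------
  -- transfer of G-integrals from ν to μ
  ------------------------------------------------------------------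
  have htransfer : ∀ (q : 𝒢 → ℝ), Measurable q → ∀ (c : ℝ), (∀ x, |q x| ≤ c) →
      ∫ ω, q (G ω) ∂(μ[|{ω | Z ω = 0}]) = ∫ ω, q (G ω) ∂μ := by
    intro q hq c hc
    have h2 : ∫ ω in {ω | Z ω = 0}, q (G ω) ∂μ
        = ∫ ω, (if Z ω = 0 then (1:ℝ) else 0) * q (G ω) ∂μ := hs_ind _
    have h3 : ∫ ω, (if Z ω = 0 then (1:ℝ) else 0) * q (G ω) ∂μ
        = (1 - π) * ∫ ω, q (G ω) ∂μ := by
      have hi : ∫ ω, (if Z ω = 0 then (1:ℝ) else 0) * q (G ω) ∂μ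
          = (∫ ω, (if Z ω = 0 then (1:ℝ) else 0) ∂μ) * ∫ ω, q (G ω) ∂μ :=
        (ha.comp hind0 hq).integral_fun_mul_eq_mul_integral
          ((hind0.comp hZ).aestronglyMeasurable) ((hq.comp hG).aestronglyMeasurable)
      rw [hint_ind0] at hi
      exact hi
    have h1 : ∫ ω in {ω | Z ω = 0}, q (G ω) ∂μ
        = (1 - π) * ∫ ω, q (G ω) ∂(μ[|{ω | Z ω = 0}]) := hint_sν _
    have := h1.symm.trans (h2.trans h3)
    exact mul_left_cancel₀ h1π.ne' this
  ------------------------------------------------------------------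
  -- the ν-integral of X equals the μ-integral
  ------------------------------------------------------------------
  have hXν_eq : ∀ (X : Ω → ℝ), Measurable X → Integrable X μ →
      IndepFun X (fun ω => (Z ω, W ω, G ω)) μ →
      ∫ ω, X ω ∂(μ[|{ω | Z ω = 0}]) = ∫ ω, X ω ∂μ := by
    intro X hXm hXint hXind
    have h2 : ∫ ω in {ω | Z ω = 0}, X ω ∂μ
        = ∫ ω, (if Z ω = 0 then (1:ℝ) else 0) * X ω ∂μ := hs_ind _
    have h3 : ∫ ω, (if Z ω = 0 then (1:ℝ) else 0) * X ω ∂μ = (1 - π) * ∫ ω, X ω ∂μ := by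
      have hψ : Measurable (fun p : ℝ × 𝒲 × 𝒢 => if p.1 = 0 then (1:ℝ) else 0) :=
        hind0.comp measurable_fst
      have hi : ∫ ω, X ω * (if Z ω = 0 then (1:ℝ) else 0) ∂μ
          = (∫ ω, X ω ∂μ) * ∫ ω, (if Z ω = 0 then (1:ℝ) else 0) ∂μ :=
        (hXind.comp measurable_id hψ).integral_fun_mul_eq_mul_integral
          hXint.aestronglyMeasurable
          ((hψ.comp (hZ.prodMk (hW.prodMk hG))).aestronglyMeasurable)
      rw [hint_ind0] at hi
      calc ∫ ω, (if Z ω = 0 then (1:ℝ) else 0) * X ω ∂μ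
          = ∫ ω, X ω * (if Z ω = 0 then (1:ℝ) else 0) ∂μ :=
            integral_congr_ae (Filter.Eventually.of_forall fun ω => mul_comm _ _)
        _ = (1 - π) * ∫ ω, X ω ∂μ := by rw [hi]; ring
    have h1 : ∫ ω in {ω | Z ω = 0}, X ω ∂μ
        = (1 - π) * ∫ ω, X ω ∂(μ[|{ω | Z ω = 0}]) := hint_sν _
    have := h1.symm.trans (h2.trans h3)
    exact mul_left_cancel₀ h1π.ne' this
  ------------------------------------------------------------------
  -- claim 1
  ------------------------------------------------------------------
  have hπ'pos : ∀ x : 𝒢, 0 < π + g x * (1 - π) := by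
    intro x; nlinarith [(hg01 x).1, (hg01 x).2]
  have hπ'ge : ∀ x : 𝒢, π ≤ π + g x * (1 - π) := by
    intro x; nlinarith [(hg01 x).1]
  have hh₁meas : Measurable (fun x : 𝒢 => (π + g x * (1 - π))⁻¹) :=
    (measurable_const.add (hgmeas.mul measurable_const)).inv
  have hh₁bdd : ∀ x : 𝒢, |(π + g x * (1 - π))⁻¹| ≤ π⁻¹ := by
    intro x
    rw [abs_of_pos (inv_pos.mpr (hπ'pos x))]
    exact inv_anti₀ hπ0 (hπ'ge x)
  have hgb : ∀ x : 𝒢, |g x| ≤ 1 := by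
    intro x
    have h1 := (hg01 x).1
    have h2 := (hg01 x).2
    rw [abs_of_nonneg h1]; linarith
  have hgh₁bdd : ∀ x : 𝒢, |g x * (π + g x * (1 - π))⁻¹| ≤ π⁻¹ := by
    intro x
    calc |g x * (π + g x * (1 - π))⁻¹| = |g x| * |(π + g x * (1 - π))⁻¹| := abs_mul _ _
      _ ≤ 1 * π⁻¹ := mul_le_mul (hgb x) (hh₁bdd x) (abs_nonneg _) zero_le_one
      _ = π⁻¹ := one_mul _
  have hZ'b : ∀ ω, |Z' ω| ≤ 1 := by intro ω; rcases hZ'01 ω with h | h <;> simp [h]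
  have h_eq1 : (fun ω => Y ω * Z' ω / (π + g (G ω) * (1 - π)))
      =ᵐ[μ] fun ω => X1 ω * (Z' ω * (π + g (G ω) * (1 - π))⁻¹) := by
    filter_upwards [hX1ae] with ω hω
    rcases hZ'01 ω with h | h
    · simp [h]
    · rw [div_eq_mul_inv, hYdef ω, h, ← hω]; ring
  have claim1_int : Integrable (fun ω => X1 ω * (Z' ω * (π + g (G ω) * (1 - π))⁻¹)) μ := by
    refine (hX1int.abs.mul_const π⁻¹).mono'
      ((hX1m.mul (hZ'.mul (hh₁meas.comp hG))).aestronglyMeasurable)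
      (Filter.Eventually.of_forall fun ω => ?_)
    have h1 : |X1 ω * (Z' ω * (π + g (G ω) * (1 - π))⁻¹)|
        = |X1 ω| * (|Z' ω| * |(π + g (G ω) * (1 - π))⁻¹|) := by
      rw [abs_mul, abs_mul]
    rw [Real.norm_eq_abs, h1]
    have h2 : |Z' ω| * |(π + g (G ω) * (1 - π))⁻¹| ≤ 1 * π⁻¹ :=
      mul_le_mul (hZ'b ω) (hh₁bdd (G ω)) (abs_nonneg _) zero_le_one
    calc |X1 ω| * (|Z' ω| * |(π + g (G ω) * (1 - π))⁻¹|)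
        ≤ |X1 ω| * (1 * π⁻¹) := mul_le_mul_of_nonneg_left h2 (abs_nonneg _)
      _ = |X1 ω| * π⁻¹ := by ring
  have part_t : ∫ ω in {ω | Z ω = 1}, X1 ω * (Z' ω * (π + g (G ω) * (1 - π))⁻¹) ∂μ
      = (∫ ω, X1 ω ∂μ) * (π * ∫ ω, (π + g (G ω) * (1 - π))⁻¹ ∂μ) := by
    have e1 : ∫ ω in {ω | Z ω = 1}, X1 ω * (Z' ω * (π + g (G ω) * (1 - π))⁻¹) ∂μ
        = ∫ ω in {ω | Z ω = 1}, X1 ω * (π + g (G ω) * (1 - π))⁻¹ ∂μ := by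
      refine setIntegral_congr_ae hmt ?_
      filter_upwards [hb] with ω hω hmem
      rw [hω hmem, one_mul]
    have e2 := ht_ind (fun ω => X1 ω * (π + g (G ω) * (1 - π))⁻¹)
    have e3 : ∫ ω, (if Z ω = 1 then (1:ℝ) else 0) * (X1 ω * (π + g (G ω) * (1 - π))⁻¹) ∂μ
        = ∫ ω, X1 ω * ((if Z ω = 1 then (1:ℝ) else 0) * (π + g (G ω) * (1 - π))⁻¹) ∂μ :=
      integral_congr_ae (Filter.Eventually.of_forall fun ω => by ring)
    have hψmeas : Measurable (fun p : ℝ × 𝒲 × 𝒢 =>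
        (if p.1 = 1 then (1:ℝ) else 0) * (π + g p.2.2 * (1 - π))⁻¹) :=
      (hind1.comp measurable_fst).mul (hh₁meas.comp (measurable_snd.comp measurable_snd))
    have e4 : ∫ ω, X1 ω * ((if Z ω = 1 then (1:ℝ) else 0) * (π + g (G ω) * (1 - π))⁻¹) ∂μ
        = (∫ ω, X1 ω ∂μ)
          * ∫ ω, (if Z ω = 1 then (1:ℝ) else 0) * (π + g (G ω) * (1 - π))⁻¹ ∂μ :=
      (hc1'.comp measurable_id hψmeas).integral_fun_mul_eq_mul_integral hX1int.aestronglyMeasurable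
        ((hψmeas.comp (hZ.prodMk (hW.prodMk hG))).aestronglyMeasurable)
    have e5 : ∫ ω, (if Z ω = 1 then (1:ℝ) else 0) * (π + g (G ω) * (1 - π))⁻¹ ∂μ
        = π * ∫ ω, (π + g (G ω) * (1 - π))⁻¹ ∂μ := by
      have hi : ∫ ω, (if Z ω = 1 then (1:ℝ) else 0) * (π + g (G ω) * (1 - π))⁻¹ ∂μ
          = (∫ ω, (if Z ω = 1 then (1:ℝ) else 0) ∂μ)
            * ∫ ω, (π + g (G ω) * (1 - π))⁻¹ ∂μ :=
        (ha.comp hind1 hh₁meas).integral_fun_mul_eq_mul_integral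
          ((hind1.comp hZ).aestronglyMeasurable) ((hh₁meas.comp hG).aestronglyMeasurable)
      rw [hint_ind1] at hi
      exact hi
    rw [e1, e2, e3, e4, e5]
  have part_s : ∫ ω in {ω | Z ω = 0}, X1 ω * (Z' ω * (π + g (G ω) * (1 - π))⁻¹) ∂μ
      = (∫ ω, X1 ω ∂μ) * ((1 - π) * ∫ ω, g (G ω) * (π + g (G ω) * (1 - π))⁻¹ ∂μ) := by
    rw [hint_sν]
    have hψ'meas : Measurable (fun p : ℝ × 𝒲 × 𝒢 => p.1 * (π + g p.2.2 * (1 - π))⁻¹) :=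
      measurable_fst.mul (hh₁meas.comp (measurable_snd.comp measurable_snd))
    have e1 : ∫ ω, X1 ω * (Z' ω * (π + g (G ω) * (1 - π))⁻¹) ∂(μ[|{ω | Z ω = 0}])
        = (∫ ω, X1 ω ∂(μ[|{ω | Z ω = 0}]))
          * ∫ ω, Z' ω * (π + g (G ω) * (1 - π))⁻¹ ∂(μ[|{ω | Z ω = 0}]) :=
      (hcore1.comp measurable_id hψ'meas).integral_fun_mul_eq_mul_integral hX1ν_int.aestronglyMeasurable
        ((hψ'meas.comp (hZ'.prodMk (hW.prodMk hG))).aestronglyMeasurable)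
    have e2 : ∫ ω, Z' ω * (π + g (G ω) * (1 - π))⁻¹ ∂(μ[|{ω | Z ω = 0}])
        = ∫ ω, (π + g (G ω) * (1 - π))⁻¹ * Z' ω ∂(μ[|{ω | Z ω = 0}]) :=
      integral_congr_ae (Filter.Eventually.of_forall fun ω => mul_comm _ _)
    have e3 : ∫ ω, (π + g (G ω) * (1 - π))⁻¹ * Z' ω ∂(μ[|{ω | Z ω = 0}])
        = ∫ ω, (π + g (G ω) * (1 - π))⁻¹ * g (G ω) ∂(μ[|{ω | Z ω = 0}]) :=
      tower _ hh₁meas π⁻¹ hh₁bdd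
    have e3' : ∫ ω, (π + g (G ω) * (1 - π))⁻¹ * g (G ω) ∂(μ[|{ω | Z ω = 0}])
        = ∫ ω, g (G ω) * (π + g (G ω) * (1 - π))⁻¹ ∂(μ[|{ω | Z ω = 0}]) :=
      integral_congr_ae (Filter.Eventually.of_forall fun ω => mul_comm _ _)
    have e4 : ∫ ω, g (G ω) * (π + g (G ω) * (1 - π))⁻¹ ∂(μ[|{ω | Z ω = 0}])
        = ∫ ω, g (G ω) * (π + g (G ω) * (1 - π))⁻¹ ∂μ :=
      htransfer (fun x => g x * (π + g x * (1 - π))⁻¹) (hgmeas.mul hh₁meas) π⁻¹ hgh₁bdd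
    rw [e1, hXν_eq X1 hX1m hX1int hc1', e2, e3, e3', e4]
    ring
  have hAB : π * (∫ ω, (π + g (G ω) * (1 - π))⁻¹ ∂μ)
      + (1 - π) * (∫ ω, g (G ω) * (π + g (G ω) * (1 - π))⁻¹ ∂μ) = 1 := by
    have i1 : Integrable (fun ω => (π + g (G ω) * (1 - π))⁻¹) μ :=
      hbddμ _ (hh₁meas.comp hG) π⁻¹ (fun ω => hh₁bdd (G ω))
    have i2 : Integrable (fun ω => g (G ω) * (π + g (G ω) * (1 - π))⁻¹) μ :=
      hbddμ _ ((hgmeas.comp hG).mul (hh₁meas.comp hG)) π⁻¹ (fun ω => hgh₁bdd (G ω))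
    calc π * (∫ ω, (π + g (G ω) * (1 - π))⁻¹ ∂μ)
          + (1 - π) * (∫ ω, g (G ω) * (π + g (G ω) * (1 - π))⁻¹ ∂μ)
        = (∫ ω, π * (π + g (G ω) * (1 - π))⁻¹ ∂μ)
          + ∫ ω, (1 - π) * (g (G ω) * (π + g (G ω) * (1 - π))⁻¹) ∂μ := by
          rw [integral_const_mul, integral_const_mul]
      _ = ∫ ω, (π * (π + g (G ω) * (1 - π))⁻¹
            + (1 - π) * (g (G ω) * (π + g (G ω) * (1 - π))⁻¹)) ∂μ :=
          (integral_add (i1.const_mul π) (i2.const_mul (1 - π))).symm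
      _ = ∫ ω, (1:ℝ) ∂μ := by
          refine integral_congr_ae (Filter.Eventually.of_forall fun ω => ?_)
          have hne := (hπ'pos (G ω)).ne'
          field_simp
      _ = 1 := by simp
  have claim1 : ∫ ω, Y ω * Z' ω / (π + g (G ω) * (1 - π)) ∂μ = ∫ ω, Y1 ω ∂μ := by
    rw [integral_congr_ae h_eq1, ← integral_add_compl hmt claim1_int, ← hst, part_t, part_s]
    have hc : (∫ ω, X1 ω ∂μ) * (π * ∫ ω, (π + g (G ω) * (1 - π))⁻¹ ∂μ)
        + (∫ ω, X1 ω ∂μ) * ((1 - π) * ∫ ω, g (G ω) * (π + g (G ω) * (1 - π))⁻¹ ∂μ)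
        = ∫ ω, X1 ω ∂μ := by
      rw [← mul_add, hAB, mul_one]
    rw [hc]
    exact (integral_congr_ae hX1ae).symm
  ------------------------------------------------------------------
  -- claim 2
  ------------------------------------------------------------------
  have h1π'pos : ∀ x : 𝒢, 0 < 1 - (π + g x * (1 - π)) := by
    intro x; nlinarith [(hg01 x).1, (hg01 x).2]
  have hh₀meas : Measurable (fun x : 𝒢 => (1 - (π + g x * (1 - π)))⁻¹) :=
    (measurable_const.sub (measurable_const.add (hgmeas.mul measurable_const))).inv
  have hh₀pos : ∀ x : 𝒢, 0 < (1 - (π + g x * (1 - π)))⁻¹ := fun x => inv_pos.mpr (h1π'pos x)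
  have hptmul : ∀ x : 𝒢, (1 - (π + g x * (1 - π)))⁻¹ * (1 - g x) = (1 - π)⁻¹ := by
    intro x
    have hgx : (0:ℝ) < 1 - g x := by nlinarith [(hg01 x).2]
    have hfac : 1 - (π + g x * (1 - π)) = (1 - π) * (1 - g x) := by ring
    rw [hfac, mul_inv, mul_assoc, inv_mul_cancel₀ hgx.ne', mul_one]
  have h1gnn : ∀ x : 𝒢, (0:ℝ) ≤ 1 - g x := by
    intro x; nlinarith [(hg01 x).2]
  have h1gb : ∀ x : 𝒢, |1 - g x| ≤ 1 := by
    intro x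
    rw [abs_of_nonneg (h1gnn x)]
    nlinarith [(hg01 x).1]
  have h1Z'nn : ∀ ω, (0:ℝ) ≤ 1 - Z' ω := by
    intro ω; rcases hZ'01 ω with h | h <;> simp [h]
  have h1Z'b : ∀ ω, |1 - Z' ω| ≤ 1 := by
    intro ω; rcases hZ'01 ω with h | h <;> simp [h]
  have eqsub : ∀ (k : 𝒢 → ℝ), Measurable k → ∀ c : ℝ, (∀ x, |k x| ≤ c) →
      ∫ ω, (1 - Z' ω) * k (G ω) ∂(μ[|{ω | Z ω = 0}])
        = ∫ ω, k (G ω) * (1 - g (G ω)) ∂(μ[|{ω | Z ω = 0}]) := by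
    intro k hk c hc
    have hkG : Integrable (fun ω => k (G ω)) (μ[|{ω | Z ω = 0}]) :=
      hbddν _ (hk.comp hG) c (fun ω => hc (G ω))
    have hkZ : Integrable (fun ω => k (G ω) * Z' ω) (μ[|{ω | Z ω = 0}]) := by
      refine hbddν _ ((hk.comp hG).mul hZ') (|c|) (fun ω => ?_)
      calc |k (G ω) * Z' ω| = |k (G ω)| * |Z' ω| := abs_mul _ _
        _ ≤ |c| * 1 := mul_le_mul ((hc (G ω)).trans (le_abs_self c)) (hZ'b ω)
            (abs_nonneg _) (abs_nonneg _)
        _ = |c| := mul_one _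
    have hkg : Integrable (fun ω => k (G ω) * g (G ω)) (μ[|{ω | Z ω = 0}]) := by
      refine hbddν _ ((hk.comp hG).mul (hgmeas.comp hG)) (|c|) (fun ω => ?_)
      calc |k (G ω) * g (G ω)| = |k (G ω)| * |g (G ω)| := abs_mul _ _
        _ ≤ |c| * 1 := mul_le_mul ((hc (G ω)).trans (le_abs_self c)) (hgb (G ω))
            (abs_nonneg _) (abs_nonneg _)
        _ = |c| := mul_one _
    calc ∫ ω, (1 - Z' ω) * k (G ω) ∂(μ[|{ω | Z ω = 0}])
        = ∫ ω, (k (G ω) - k (G ω) * Z' ω) ∂(μ[|{ω | Z ω = 0}]) :=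
          integral_congr_ae (Filter.Eventually.of_forall fun ω => by ring)
      _ = (∫ ω, k (G ω) ∂(μ[|{ω | Z ω = 0}]))
          - ∫ ω, k (G ω) * Z' ω ∂(μ[|{ω | Z ω = 0}]) := integral_sub hkG hkZ
      _ = (∫ ω, k (G ω) ∂(μ[|{ω | Z ω = 0}]))
          - ∫ ω, k (G ω) * g (G ω) ∂(μ[|{ω | Z ω = 0}]) := by rw [tower k hk c hc]
      _ = ∫ ω, (k (G ω) - k (G ω) * g (G ω)) ∂(μ[|{ω | Z ω = 0}]) :=
          (integral_sub hkG hkg).symm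
      _ = ∫ ω, k (G ω) * (1 - g (G ω)) ∂(μ[|{ω | Z ω = 0}]) :=
          integral_congr_ae (Filter.Eventually.of_forall fun ω => by ring)
  have hhnmeas : ∀ n : ℕ, Measurable (fun x : 𝒢 => min ((1 - (π + g x * (1 - π)))⁻¹) (n:ℝ)) :=
    fun n => hh₀meas.min measurable_const
  have hhnbdd : ∀ n : ℕ, ∀ x : 𝒢, |min ((1 - (π + g x * (1 - π)))⁻¹) (n:ℝ)| ≤ (n:ℝ) := by
    intro n x
    rw [abs_of_nonneg (le_min (hh₀pos x).le (Nat.cast_nonneg n))]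
    exact min_le_right _ _
  have hVn_int : ∀ n : ℕ, Integrable
      (fun ω => (1 - Z' ω) * min ((1 - (π + g (G ω) * (1 - π)))⁻¹) (n:ℝ))
      (μ[|{ω | Z ω = 0}]) := by
    intro n
    refine hbddν _ ((measurable_const.sub hZ').mul ((hhnmeas n).comp hG)) (n:ℝ) (fun ω => ?_)
    calc |(1 - Z' ω) * min ((1 - (π + g (G ω) * (1 - π)))⁻¹) (n:ℝ)|
        = |1 - Z' ω| * |min ((1 - (π + g (G ω) * (1 - π)))⁻¹) (n:ℝ)| := abs_mul _ _
      _ ≤ 1 * (n:ℝ) := mul_le_mul (h1Z'b ω) (hhnbdd n (G ω)) (abs_nonneg _) zero_le_one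
      _ = (n:ℝ) := one_mul _
  have hVn_eq : ∀ n : ℕ,
      ∫ ω, (1 - Z' ω) * min ((1 - (π + g (G ω) * (1 - π)))⁻¹) (n:ℝ) ∂(μ[|{ω | Z ω = 0}])
        = ∫ ω, min ((1 - (π + g (G ω) * (1 - π)))⁻¹) (n:ℝ) * (1 - g (G ω))
            ∂(μ[|{ω | Z ω = 0}]) :=
    fun n => eqsub _ (hhnmeas n) (n:ℝ) (hhnbdd n)
  have hVnn : ∀ ω, (0:ℝ) ≤ (1 - Z' ω) * (1 - (π + g (G ω) * (1 - π)))⁻¹ :=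
    fun ω => mul_nonneg (h1Z'nn ω) (hh₀pos (G ω)).le
  have hVmeas : Measurable (fun ω => (1 - Z' ω) * (1 - (π + g (G ω) * (1 - π)))⁻¹) :=
    (measurable_const.sub hZ').mul (hh₀meas.comp hG)
  have hgn_mono : ∀ ω, Monotone (fun n : ℕ =>
      (1 - Z' ω) * min ((1 - (π + g (G ω) * (1 - π)))⁻¹) (n:ℝ)) := by
    intro ω a b hab
    exact mul_le_mul_of_nonneg_left (min_le_min le_rfl (Nat.cast_le.mpr hab)) (h1Z'nn ω)
  have hgn_tendsto : ∀ ω, Filter.Tendsto (fun n : ℕ =>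
      (1 - Z' ω) * min ((1 - (π + g (G ω) * (1 - π)))⁻¹) (n:ℝ)) Filter.atTop
      (nhds ((1 - Z' ω) * (1 - (π + g (G ω) * (1 - π)))⁻¹)) := by
    intro ω
    obtain ⟨n₀, hn₀⟩ := exists_nat_ge ((1 - (π + g (G ω) * (1 - π)))⁻¹)
    refine tendsto_atTop_of_eventually_const (i₀ := n₀) fun n hn => ?_
    rw [min_eq_left (hn₀.trans (Nat.cast_le.mpr hn))]
  have hVint : Integrable (fun ω => (1 - Z' ω) * (1 - (π + g (G ω) * (1 - π)))⁻¹)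
      (μ[|{ω | Z ω = 0}]) := by
    refine ⟨hVmeas.aestronglyMeasurable, ?_⟩
    rw [hasFiniteIntegral_iff_ofReal (Filter.Eventually.of_forall hVnn)]
    have hsup_pt : ∀ ω : Ω, ENNReal.ofReal ((1 - Z' ω) * (1 - (π + g (G ω) * (1 - π)))⁻¹)
        = ⨆ n : ℕ, ENNReal.ofReal
            ((1 - Z' ω) * min ((1 - (π + g (G ω) * (1 - π)))⁻¹) (n:ℝ)) := by
      intro ω
      obtain ⟨n₀, hn₀⟩ := exists_nat_ge ((1 - (π + g (G ω) * (1 - π)))⁻¹)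
      apply le_antisymm
      · refine le_iSup_of_le n₀ ?_
        rw [min_eq_left hn₀]
      · refine iSup_le fun n => ENNReal.ofReal_le_ofReal
          (mul_le_mul_of_nonneg_left (min_le_left _ _) (h1Z'nn ω))
    have hmono : Monotone (fun (n : ℕ) (ω : Ω) => ENNReal.ofReal
        ((1 - Z' ω) * min ((1 - (π + g (G ω) * (1 - π)))⁻¹) (n:ℝ))) := by
      intro a b hab ω
      exact ENNReal.ofReal_le_ofReal (hgn_mono ω hab)
    have hmeasn : ∀ n : ℕ, Measurable (fun ω : Ω => ENNReal.ofReal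
        ((1 - Z' ω) * min ((1 - (π + g (G ω) * (1 - π)))⁻¹) (n:ℝ))) := fun n =>
      ((measurable_const.sub hZ').mul ((hhnmeas n).comp hG)).ennreal_ofReal
    have hle : ∫⁻ ω, ENNReal.ofReal ((1 - Z' ω) * (1 - (π + g (G ω) * (1 - π)))⁻¹)
        ∂(μ[|{ω | Z ω = 0}]) ≤ ENNReal.ofReal ((1 - π)⁻¹) :=
      calc ∫⁻ ω, ENNReal.ofReal ((1 - Z' ω) * (1 - (π + g (G ω) * (1 - π)))⁻¹)
          ∂(μ[|{ω | Z ω = 0}])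
        = ∫⁻ ω, ⨆ n : ℕ, ENNReal.ofReal
            ((1 - Z' ω) * min ((1 - (π + g (G ω) * (1 - π)))⁻¹) (n:ℝ))
          ∂(μ[|{ω | Z ω = 0}]) := lintegral_congr hsup_pt
      _ = ⨆ n : ℕ, ∫⁻ ω, ENNReal.ofReal
            ((1 - Z' ω) * min ((1 - (π + g (G ω) * (1 - π)))⁻¹) (n:ℝ))
          ∂(μ[|{ω | Z ω = 0}]) := lintegral_iSup hmeasn hmono
      _ ≤ ENNReal.ofReal ((1 - π)⁻¹) := by
          refine iSup_le fun n => ?_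
          rw [← ofReal_integral_eq_lintegral_ofReal (hVn_int n)
            (Filter.Eventually.of_forall fun ω =>
              mul_nonneg (h1Z'nn ω) (le_min (hh₀pos (G ω)).le (Nat.cast_nonneg n)))]
          refine ENNReal.ofReal_le_ofReal ?_
          rw [hVn_eq n]
          have hconst : ∫ ω, ((1:ℝ) - π)⁻¹ ∂(μ[|{ω | Z ω = 0}]) = (1 - π)⁻¹ := by simp
          rw [← hconst]
          refine integral_mono (hbddν _ (((hhnmeas n).comp hG).mul
            (measurable_const.sub (hgmeas.comp hG))) (n:ℝ) (fun ω => ?_))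
            (integrable_const _) (fun ω => ?_)
          · calc |min ((1 - (π + g (G ω) * (1 - π)))⁻¹) (n:ℝ) * (1 - g (G ω))|
                = |min ((1 - (π + g (G ω) * (1 - π)))⁻¹) (n:ℝ)| * |1 - g (G ω)| := abs_mul _ _
              _ ≤ (n:ℝ) * 1 := mul_le_mul (hhnbdd n (G ω)) (h1gb (G ω)) (abs_nonneg _)
                  (Nat.cast_nonneg n)
              _ = (n:ℝ) := mul_one _
          · calc min ((1 - (π + g (G ω) * (1 - π)))⁻¹) (n:ℝ) * (1 - g (G ω))
                ≤ (1 - (π + g (G ω) * (1 - π)))⁻¹ * (1 - g (G ω)) :=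
                  mul_le_mul_of_nonneg_right (min_le_left _ _) (h1gnn (G ω))
              _ = (1 - π)⁻¹ := hptmul (G ω)
    exact lt_of_le_of_lt hle ENNReal.ofReal_lt_top
  have hVval : ∫ ω, (1 - Z' ω) * (1 - (π + g (G ω) * (1 - π)))⁻¹ ∂(μ[|{ω | Z ω = 0}])
      = (1 - π)⁻¹ := by
    have T1 := integral_tendsto_of_tendsto_of_monotone hVn_int hVint
      (Filter.Eventually.of_forall hgn_mono) (Filter.Eventually.of_forall hgn_tendsto)
    have i_kn : ∀ n : ℕ, Integrable (fun ω => min ((1 - (π + g (G ω) * (1 - π)))⁻¹) (n:ℝ)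
        * (1 - g (G ω))) (μ[|{ω | Z ω = 0}]) := by
      intro n
      refine hbddν _ (((hhnmeas n).comp hG).mul
        (measurable_const.sub (hgmeas.comp hG))) (n:ℝ) (fun ω => ?_)
      calc |min ((1 - (π + g (G ω) * (1 - π)))⁻¹) (n:ℝ) * (1 - g (G ω))|
          = |min ((1 - (π + g (G ω) * (1 - π)))⁻¹) (n:ℝ)| * |1 - g (G ω)| := abs_mul _ _
        _ ≤ (n:ℝ) * 1 := mul_le_mul (hhnbdd n (G ω)) (h1gb (G ω)) (abs_nonneg _)
            (Nat.cast_nonneg n)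
        _ = (n:ℝ) := mul_one _
    have T2' := integral_tendsto_of_tendsto_of_monotone i_kn
      (integrable_const ((1 - π)⁻¹ : ℝ))
      (Filter.Eventually.of_forall (fun ω => by
        intro a b hab
        exact mul_le_mul_of_nonneg_right (min_le_min le_rfl (Nat.cast_le.mpr hab))
          (h1gnn (G ω))))
      (Filter.Eventually.of_forall (fun ω => by
        obtain ⟨n₀, hn₀⟩ := exists_nat_ge ((1 - (π + g (G ω) * (1 - π)))⁻¹)
        refine tendsto_atTop_of_eventually_const (i₀ := n₀) fun n hn => ?_
        rw [min_eq_left (hn₀.trans (Nat.cast_le.mpr hn)), hptmul (G ω)]))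
    have hconstint : ∫ ω, ((1 - π)⁻¹ : ℝ) ∂(μ[|{ω | Z ω = 0}]) = (1 - π)⁻¹ := by simp
    rw [hconstint] at T2'
    have T2 : Filter.Tendsto
        (fun n : ℕ => ∫ ω, (1 - Z' ω) * min ((1 - (π + g (G ω) * (1 - π)))⁻¹) (n:ℝ)
          ∂(μ[|{ω | Z ω = 0}])) Filter.atTop (nhds ((1 - π)⁻¹)) := by
      have hfe : (fun n : ℕ => ∫ ω, (1 - Z' ω) * min ((1 - (π + g (G ω) * (1 - π)))⁻¹) (n:ℝ)
          ∂(μ[|{ω | Z ω = 0}]))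
          = fun n : ℕ => ∫ ω, min ((1 - (π + g (G ω) * (1 - π)))⁻¹) (n:ℝ) * (1 - g (G ω))
            ∂(μ[|{ω | Z ω = 0}]) := funext hVn_eq
      rw [hfe]
      exact T2'
    exact tendsto_nhds_unique T1 T2
  have h_eq0 : (fun ω => Y ω * (1 - Z' ω) / (1 - (π + g (G ω) * (1 - π))))
      =ᵐ[μ] fun ω => X0 ω * ((1 - Z' ω) * (1 - (π + g (G ω) * (1 - π)))⁻¹) := by
    filter_upwards [hX0ae] with ω hω
    rcases hZ'01 ω with h | h
    · rw [div_eq_mul_inv, hYdef ω, h, ← hω]; ring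
    · simp [h]
  have hψ₀meas : Measurable (fun p : ℝ × 𝒲 × 𝒢 =>
      (1 - p.1) * (1 - (π + g p.2.2 * (1 - π)))⁻¹) :=
    (measurable_const.sub measurable_fst).mul
      (hh₀meas.comp (measurable_snd.comp measurable_snd))
  have hprod_ν : Integrable (fun ω => X0 ω * ((1 - Z' ω) * (1 - (π + g (G ω) * (1 - π)))⁻¹))
      (μ[|{ω | Z ω = 0}]) := by
    have hI : IndepFun X0 (fun ω => (1 - Z' ω) * (1 - (π + g (G ω) * (1 - π)))⁻¹)
        (μ[|{ω | Z ω = 0}]) := hcore0.comp measurable_id hψ₀meas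
    exact hI.integrable_mul hX0ν_int hVint
  have claim2_int : Integrable
      (fun ω => X0 ω * ((1 - Z' ω) * (1 - (π + g (G ω) * (1 - π)))⁻¹)) μ := by
    have hIt : IntegrableOn (fun ω => X0 ω * ((1 - Z' ω) * (1 - (π + g (G ω) * (1 - π)))⁻¹))
        {ω | Z ω = 1} μ := by
      have hzero : (fun ω => X0 ω * ((1 - Z' ω) * (1 - (π + g (G ω) * (1 - π)))⁻¹))
          =ᵐ[μ.restrict {ω | Z ω = 1}] (fun _ => (0:ℝ)) := by
        have hb' : ∀ᵐ ω ∂(μ.restrict {ω | Z ω = 1}), Z ω = 1 → Z' ω = 1 := ae_restrict_of_ae hb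
        have hmem : ∀ᵐ ω ∂(μ.restrict {ω | Z ω = 1}), ω ∈ {ω | Z ω = 1} :=
          ae_restrict_mem hmt
        filter_upwards [hb', hmem] with ω h1 h2
        rw [h1 h2]; ring
      exact (integrable_const (0:ℝ)).congr hzero.symm
    have hIs : IntegrableOn (fun ω => X0 ω * ((1 - Z' ω) * (1 - (π + g (G ω) * (1 - π)))⁻¹))
        {ω | Z ω = 0} μ := by
      rw [IntegrableOn, hrestrict_eq]
      exact hprod_ν.smul_measure (measure_ne_top μ _)
    have hun := hIt.union hIs
    rw [← integrableOn_univ]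
    have huniv : (Set.univ : Set Ω) = {ω | Z ω = 1} ∪ {ω | Z ω = 0} := by
      ext ω; rcases hZ01 ω with h | h <;> simp [h]
    rw [huniv]
    exact hun
  have part_t0 : ∫ ω in {ω | Z ω = 1},
      X0 ω * ((1 - Z' ω) * (1 - (π + g (G ω) * (1 - π)))⁻¹) ∂μ = 0 := by
    have hz : ∫ ω in {ω | Z ω = 1},
        X0 ω * ((1 - Z' ω) * (1 - (π + g (G ω) * (1 - π)))⁻¹) ∂μ
        = ∫ ω in {ω | Z ω = 1}, (0:ℝ) ∂μ := by
      refine setIntegral_congr_ae hmt ?_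
      filter_upwards [hb] with ω h1 h2
      rw [h1 h2]; ring
    simpa using hz
  have part_s0 : ∫ ω in {ω | Z ω = 0},
      X0 ω * ((1 - Z' ω) * (1 - (π + g (G ω) * (1 - π)))⁻¹) ∂μ = ∫ ω, Y0 ω ∂μ := by
    rw [hint_sν]
    have e1 : ∫ ω, X0 ω * ((1 - Z' ω) * (1 - (π + g (G ω) * (1 - π)))⁻¹)
          ∂(μ[|{ω | Z ω = 0}])
        = (∫ ω, X0 ω ∂(μ[|{ω | Z ω = 0}]))
          * ∫ ω, (1 - Z' ω) * (1 - (π + g (G ω) * (1 - π)))⁻¹ ∂(μ[|{ω | Z ω = 0}]) :=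
      (hcore0.comp measurable_id hψ₀meas).integral_fun_mul_eq_mul_integral hX0ν_int.aestronglyMeasurable
        ((hψ₀meas.comp (hZ'.prodMk (hW.prodMk hG))).aestronglyMeasurable)
    rw [e1, hXν_eq X0 hX0m hX0int hc0', hVval]
    have hcancel : (1 - π) * ((∫ ω, X0 ω ∂μ) * (1 - π)⁻¹) = ∫ ω, X0 ω ∂μ := by
      field_simp
    rw [hcancel]
    exact (integral_congr_ae hX0ae).symm
  have claim2 : ∫ ω, Y ω * (1 - Z' ω) / (1 - (π + g (G ω) * (1 - π))) ∂μ
      = ∫ ω, Y0 ω ∂μ := by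
    rw [integral_congr_ae h_eq0, ← integral_add_compl hmt claim2_int, ← hst,
      part_t0, part_s0, zero_add]
  refine ⟨claim1, claim2, ?_⟩
  have int_a : Integrable (fun ω => Y ω * Z' ω / (π + g (G ω) * (1 - π))) μ :=
    claim1_int.congr h_eq1.symm
  have int_b : Integrable (fun ω => Y ω * (1 - Z' ω) / (1 - (π + g (G ω) * (1 - π)))) μ :=
    claim2_int.congr h_eq0.symm
  rw [integral_sub int_a int_b, claim1, claim2]
end
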